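/- arXiv:1702.07179 — 6 statements merged into one kernel-verified Lean document; each statement's English description precedes it below -/
import Mathlib

section
/- Let D be a connected even delta-matroid. If e ∈ E(D), then D∖e or D/e is connected. -/
noncomputable section
open scoped Classical symmDiff

/-- A set system: a finite ground set `E` together with a collection `Fs` of subsets of
`E`, the feasible sets. -/
structure SetSystem (α : Type*) where
  E : Finset α
  Fs : Set (Finset α)

namespace SetSystem

variable {α : Type*} [DecidableEq α]

/-- A delta-matroid: a set system whose nonempty collection of feasible sets (subsets of
the ground set) satisfies the symmetric exchange axiom. -/
def IsDeltaMatroid (D : SetSystem α) : Prop :=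
  D.Fs.Nonempty ∧ (∀ F ∈ D.Fs, F ⊆ D.E) ∧
    ∀ F₁ ∈ D.Fs, ∀ F₂ ∈ D.Fs, ∀ x ∈ F₁ ∆ F₂, ∃ y ∈ F₁ ∆ F₂, F₁ ∆ ({x, y} : Finset α) ∈ D.Fs

/-- A delta-matroid is even if all its feasible sets have the same parity of size. -/
def IsEven (D : SetSystem α) : Prop :=
  ∀ F₁ ∈ D.Fs, ∀ F₂ ∈ D.Fs, F₁.card % 2 = F₂.card % 2

/-- `e` is a coloop: it belongs to every feasible set. -/
def IsColoop (D : SetSystem α) (e : α) : Prop := ∀ F ∈ D.Fs, e ∈ F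

/-- `e` is a loop: it belongs to no feasible set. -/
def IsLoop (D : SetSystem α) (e : α) : Prop := ∀ F ∈ D.Fs, e ∉ F

/-- The underlying deletion operation: keep the feasible sets avoiding `e`. -/
def del₀ (D : SetSystem α) (e : α) : SetSystem α :=
  ⟨D.E.erase e, {F | F ∈ D.Fs ∧ e ∉ F}⟩

/-- The underlying contraction operation: remove `e` from the feasible sets containing it. -/
def con₀ (D : SetSystem α) (e : α) : SetSystem α :=
  ⟨D.E.erase e, {F | ∃ G ∈ D.Fs, e ∈ G ∧ F = G.erase e}⟩

/-- Deletion `D∖e`: `del₀` if `e` is not a coloop, and `con₀` (= `D/e`) if `e` is a coloop. -/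
def delete (D : SetSystem α) (e : α) : SetSystem α :=
  if D.IsColoop e then D.con₀ e else D.del₀ e

/-- Contraction `D/e`: `con₀` if `e` is not a loop, and `del₀` (= `D∖e`) if `e` is a loop. -/
def contract (D : SetSystem α) (e : α) : SetSystem α :=
  if D.IsLoop e then D.del₀ e else D.con₀ e

/-- The twist `D*A`: replace each feasible set `F` by `F ∆ A`. -/
def twist (D : SetSystem α) (A : Finset α) : SetSystem α :=
  ⟨D.E, {F | ∃ G ∈ D.Fs, F = G ∆ A}⟩

/-- Loop complementation `D+e`. -/
def lcomp (D : SetSystem α) (e : α) : SetSystem α :=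
  ⟨D.E, D.Fs ∆ {F | ∃ G ∈ D.Fs, e ∉ G ∧ F = G ∪ {e}}⟩

/-- Loop complementation `D+A` by a set `A = {a₁, …, aₙ}`, defined as the iterated
single-element loop complementation `D+a₁+⋯+aₙ` (the result is order-independent). -/
def lcompSet (D : SetSystem α) (A : Finset α) : SetSystem α :=
  A.toList.foldl lcomp D

/-- The operation `D ∗̄ A = D+A*A+A`. -/
def starBar (D : SetSystem α) (A : Finset α) : SetSystem α :=
  ((D.lcompSet A).twist A).lcompSet A

/-- The direct sum of two set systems. -/
def directSum (D₁ D₂ : SetSystem α) : SetSystem α :=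
  ⟨D₁.E ∪ D₂.E, {F | ∃ F₁ ∈ D₁.Fs, ∃ F₂ ∈ D₂.Fs, F = F₁ ∪ F₂}⟩

/-- `X` is a separator of `D`: `D = D₁ ⊕ D₂` for set systems `D₁`, `D₂` with ground sets
`X` and `E − X`. -/
def IsSeparator (D : SetSystem α) (X : Finset α) : Prop :=
  X ⊆ D.E ∧ ∃ D₁ D₂ : SetSystem α, D₁.E = X ∧ D₂.E = D.E \ X ∧
    (∀ F ∈ D₁.Fs, F ⊆ D₁.E) ∧ (∀ F ∈ D₂.Fs, F ⊆ D₂.E) ∧ D = D₁.directSum D₂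

/-- `D` is connected: it has no proper separator. -/
def Connected (D : SetSystem α) : Prop :=
  ¬ ∃ X, D.IsSeparator X ∧ X.Nonempty ∧ X ≠ D.E

/-- `D'` is a minor of `D`: it is obtained from `D` by a sequence of single-element
deletions and contractions. -/
inductive MinorOf : SetSystem α → SetSystem α → Prop
  | refl (D : SetSystem α) : MinorOf D D
  | del {D' D : SetSystem α} (e : α) : MinorOf D' D → e ∈ D'.E → MinorOf (D'.delete e) D
  | con {D' D : SetSystem α} (e : α) : MinorOf D' D → e ∈ D'.E → MinorOf (D'.contract e) D

/-- `D'` is a 3-minor of `D`: it is obtained from `D` by a sequence of single-element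
deletions, contractions and twist-contractions `D ↦ (D+e)/e`. -/
inductive Minor3Of : SetSystem α → SetSystem α → Prop
  | refl (D : SetSystem α) : Minor3Of D D
  | del {D' D : SetSystem α} (e : α) : Minor3Of D' D → e ∈ D'.E → Minor3Of (D'.delete e) D
  | con {D' D : SetSystem α} (e : α) : Minor3Of D' D → e ∈ D'.E → Minor3Of (D'.contract e) D
  | tcon {D' D : SetSystem α} (e : α) : Minor3Of D' D → e ∈ D'.E →
      Minor3Of ((D'.lcomp e).contract e) D

/-- `D` is vf-safe: every set system obtained from `D` by a sequence of twists by single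
elements and loop complementations is a delta-matroid. -/
inductive TwistLcompReach : SetSystem α → SetSystem α → Prop
  | refl (D : SetSystem α) : TwistLcompReach D D
  | twist {D' D : SetSystem α} (e : α) : TwistLcompReach D' D → e ∈ D'.E →
      TwistLcompReach (D'.twist {e}) D
  | lcomp {D' D : SetSystem α} (e : α) : TwistLcompReach D' D → e ∈ D'.E →
      TwistLcompReach (D'.lcomp e) D

/-- A vf-safe delta-matroid. -/
def IsVfSafe (D : SetSystem α) : Prop :=
  ∀ D' : SetSystem α, TwistLcompReach D' D → D'.IsDeltaMatroid

end SetSystem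

set_option linter.unreachableTactic false
set_option linter.unusedTactic false
set_option linter.unnecessarySeqFocus false

namespace ChainEvenAux

open SetSystem

variable {α : Type*} [DecidableEq α]

/-- abstract exchange property -/
def Exch (Fs : Set (Finset α)) : Prop :=
  ∀ F₁ ∈ Fs, ∀ F₂ ∈ Fs, ∀ x ∈ F₁ ∆ F₂, ∃ y ∈ F₁ ∆ F₂, F₁ ∆ ({x, y} : Finset α) ∈ Fs

/-- abstract evenness -/
def Evn (Fs : Set (Finset α)) : Prop :=
  ∀ F₁ ∈ Fs, ∀ F₂ ∈ Fs, F₁.card % 2 = F₂.card % 2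

lemma symmDiff_singleton_card (F : Finset α) (x : α) :
    (F ∆ ({x} : Finset α)).card % 2 ≠ F.card % 2 := by
  by_cases hx : x ∈ F
  · have h : F ∆ ({x} : Finset α) = F.erase x := by
      ext a
      simp only [Finset.mem_symmDiff, Finset.mem_singleton, Finset.mem_erase]
      by_cases hax : a = x <;> simp [hax, hx]
    rw [h, Finset.card_erase_of_mem hx]
    have := Finset.card_pos.mpr ⟨x, hx⟩
    omega
  · have h : F ∆ ({x} : Finset α) = insert x F := by
      ext a
      simp only [Finset.mem_symmDiff, Finset.mem_singleton, Finset.mem_insert]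
      by_cases hax : a = x <;> simp [hax, hx]
    rw [h, Finset.card_insert_of_notMem hx]
    omega

/-- even exchange: the exchanged element can be chosen distinct from `x` -/
lemma exch2 {Fs : Set (Finset α)} (hex : Exch Fs) (hev : Evn Fs)
    {F₁ F₂ : Finset α} {x : α} (h1 : F₁ ∈ Fs) (h2 : F₂ ∈ Fs) (hx : x ∈ F₁ ∆ F₂) :
    ∃ y ∈ F₁ ∆ F₂, y ≠ x ∧ F₁ ∆ ({x, y} : Finset α) ∈ Fs := by
  obtain ⟨y, hy, hmem⟩ := hex F₁ h1 F₂ h2 x hx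
  refine ⟨y, hy, fun hyx => ?_, hmem⟩
  rw [hyx, show ({x,x}:Finset α) = {x} from by ext a; simp] at hmem
  exact symmDiff_singleton_card F₁ x (hev _ hmem _ h1)

/-- mixing property of a separator -/
lemma sep_mix {D : SetSystem α} {X : Finset α} (h : D.IsSeparator X) :
    ∀ F₁ ∈ D.Fs, ∀ F₂ ∈ D.Fs, (F₁ ∩ X) ∪ (F₂ \ X) ∈ D.Fs := by
  obtain ⟨hXE, D₁, D₂, hE1, hE2, hb1, hb2, hEq⟩ := h
  intro F₁ h₁ F₂ h₂
  rw [hEq] at h₁ h₂ ⊢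
  obtain ⟨a₁, ha₁, b₁, hb₁m, rfl⟩ := h₁
  obtain ⟨a₂, ha₂, b₂, hb₂m, rfl⟩ := h₂
  refine ⟨a₁, ha₁, b₂, hb₂m, ?_⟩
  have hsa₁ : a₁ ⊆ X := hE1 ▸ hb1 _ ha₁
  have hsa₂ : a₂ ⊆ X := hE1 ▸ hb1 _ ha₂
  have hsb₁ : ∀ a ∈ b₁, a ∉ X := fun a ha => (Finset.mem_sdiff.mp (hE2 ▸ hb2 _ hb₁m ha)).2
  have hsb₂ : ∀ a ∈ b₂, a ∉ X := fun a ha => (Finset.mem_sdiff.mp (hE2 ▸ hb2 _ hb₂m ha)).2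
  ext a
  simp only [Finset.mem_union, Finset.mem_inter, Finset.mem_sdiff]
  constructor
  · rintro (⟨h | h, _⟩ | ⟨h | h, hnX⟩)
    · exact Or.inl h
    · exact absurd ‹a ∈ X› (hsb₁ a h)
    · exact absurd (hsa₂ h) hnX
    · exact Or.inr h
  · rintro (h | h)
    · exact Or.inl ⟨Or.inl h, hsa₁ h⟩
    · exact Or.inr ⟨Or.inr h, hsb₂ a h⟩

/-- a separator admits no crossing edge (uses evenness) -/
lemma nc_of_sep {D : SetSystem α} {X : Finset α} (hev : Evn D.Fs) (hsep : D.IsSeparator X) :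
    ∀ F ∈ D.Fs, ∀ u v, u ∈ X → v ∉ X → F ∆ ({u, v} : Finset α) ∈ D.Fs → False := by
  intro F hF u v huX hvX hmem
  have huv : u ≠ v := fun h => hvX (h ▸ huX)
  have hM : (F ∩ X) ∪ ((F ∆ ({u, v} : Finset α)) \ X) ∈ D.Fs := sep_mix hsep F hF _ hmem
  have hMeq : (F ∩ X) ∪ ((F ∆ ({u, v} : Finset α)) \ X) = F ∆ ({v} : Finset α) := by
    ext a
    simp only [Finset.mem_union, Finset.mem_inter, Finset.mem_sdiff, Finset.mem_symmDiff,
      Finset.mem_insert, Finset.mem_singleton]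
    by_cases hau : a = u <;> by_cases hav : a = v
    · exact absurd (hau.symm.trans hav) huv
    · subst hau; simp [huv, huX, hvX] <;> tauto
    · subst hav; simp [Ne.symm huv, hvX] <;> tauto
    · simp [hau, hav] <;> tauto
  rw [hMeq] at hM
  exact symmDiff_singleton_card F v (hev _ hM _ hF)

/-- no crossing edges implies the mixing property (uses exchange + evenness) -/
lemma mix_of_nc {Fs : Set (Finset α)} (hex : Exch Fs) (hev : Evn Fs) {X : Finset α}
    (hnc : ∀ F ∈ Fs, ∀ u v, u ∈ X → v ∉ X → F ∆ ({u, v} : Finset α) ∈ Fs → False) :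
    ∀ F₁ ∈ Fs, ∀ F₂ ∈ Fs, (F₁ ∩ X) ∪ (F₂ \ X) ∈ Fs := by
  suffices h : ∀ n : ℕ, ∀ F₁ ∈ Fs, ∀ F₂ ∈ Fs, ((F₁ ∆ F₂) ∩ X).card = n →
      (F₁ ∩ X) ∪ (F₂ \ X) ∈ Fs by
    intro F₁ h₁ F₂ h₂; exact h _ F₁ h₁ F₂ h₂ rfl
  intro n
  induction n using Nat.strong_induction_on with
  | _ n ih =>
    intro F₁ h₁ F₂ h₂ hcard
    rcases Finset.eq_empty_or_nonempty ((F₁ ∆ F₂) ∩ X) with hemp | ⟨x, hx⟩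
    · have hXeq : F₁ ∩ X = F₂ ∩ X := by
        ext a
        simp only [Finset.mem_inter]
        constructor
        · rintro ⟨ha, haX⟩
          refine ⟨by_contra fun hna => ?_, haX⟩
          exact (Finset.notMem_empty a) (hemp ▸ Finset.mem_inter.mpr
            ⟨Finset.mem_symmDiff.mpr (Or.inl ⟨ha, hna⟩), haX⟩)
        · rintro ⟨ha, haX⟩
          refine ⟨by_contra fun hna => ?_, haX⟩
          exact (Finset.notMem_empty a) (hemp ▸ Finset.mem_inter.mpr
            ⟨Finset.mem_symmDiff.mpr (Or.inr ⟨ha, hna⟩), haX⟩)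
      rw [hXeq]
      have hFX : F₂ ∩ X ∪ F₂ \ X = F₂ := by
        ext a; simp only [Finset.mem_union, Finset.mem_inter, Finset.mem_sdiff]; tauto
      rwa [hFX]
    · obtain ⟨hxd, hxX⟩ := Finset.mem_inter.mp hx
      have hxd' : x ∈ F₂ ∆ F₁ := by rwa [symmDiff_comm]
      obtain ⟨y, hyd, hyx, hmem⟩ := exch2 hex hev h₂ h₁ hxd'
      have hyX : y ∈ X := by
        by_contra hyX
        exact hnc F₂ h₂ x y hxX hyX hmem
      set F₂' := F₂ ∆ ({x, y} : Finset α) with hF₂'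
      have hsd : F₂' \ X = F₂ \ X := by
        ext a
        simp only [hF₂', Finset.mem_sdiff, Finset.mem_symmDiff, Finset.mem_insert,
          Finset.mem_singleton]
        by_cases hax : a = x
        · subst hax; simp [hxX]
        · by_cases hay : a = y
          · subst hay; simp [hyX]
          · simp [hax, hay] <;> tauto
      have hdiff : F₁ ∆ F₂' = (F₁ ∆ F₂) \ {x, y} := by
        ext a
        simp only [hF₂', Finset.mem_sdiff, Finset.mem_symmDiff, Finset.mem_insert,
          Finset.mem_singleton]
        have hx2 : x ∈ F₁ ∆ F₂ := hxd
        have hy2 : y ∈ F₁ ∆ F₂ := by rwa [symmDiff_comm]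
        rw [Finset.mem_symmDiff] at hx2 hy2
        by_cases hax : a = x
        · subst hax; simp <;> tauto
        · by_cases hay : a = y
          · subst hay; simp <;> tauto
          · simp [hax, hay] <;> tauto
      have hxy_sub : ({x, y} : Finset α) ⊆ (F₁ ∆ F₂) ∩ X := by
        intro a ha
        rcases Finset.mem_insert.mp ha with rfl | ha
        · exact hx
        · rw [Finset.mem_singleton] at ha; subst ha
          exact Finset.mem_inter.mpr ⟨by rwa [symmDiff_comm] at hyd, hyX⟩
      have hcard' : ((F₁ ∆ F₂') ∩ X).card < n := by
        rw [hdiff]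
        have hsub2 : ((F₁ ∆ F₂) \ {x, y}) ∩ X ⊂ (F₁ ∆ F₂) ∩ X := by
          refine Finset.ssubset_iff_of_subset (Finset.inter_subset_inter
            (Finset.sdiff_subset) le_rfl) |>.mpr ?_
          exact ⟨x, hx, by simp⟩
        calc (((F₁ ∆ F₂) \ {x, y}) ∩ X).card < ((F₁ ∆ F₂) ∩ X).card :=
              Finset.card_lt_card hsub2
          _ = n := hcard
      have := ih _ hcard' F₁ h₁ F₂' hmem rfl
      rwa [hsd] at this

/-- no crossing edges implies separator -/
lemma sep_of_nc {D : SetSystem α} (hex : Exch D.Fs) (hev : Evn D.Fs)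
    (hsub : ∀ F ∈ D.Fs, F ⊆ D.E) {X : Finset α} (hXE : X ⊆ D.E)
    (hnc : ∀ F ∈ D.Fs, ∀ u v, u ∈ X → v ∉ X → F ∆ ({u, v} : Finset α) ∈ D.Fs → False) :
    D.IsSeparator X := by
  refine ⟨hXE, ⟨X, {G | ∃ F ∈ D.Fs, G = F ∩ X}⟩, ⟨D.E \ X, {G | ∃ F ∈ D.Fs, G = F \ X}⟩,
    rfl, rfl, ?_, ?_, ?_⟩
  · rintro G ⟨F, hF, rfl⟩
    exact Finset.inter_subset_right
  · rintro G ⟨F, hF, rfl⟩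
    exact fun a ha => Finset.mem_sdiff.mpr
      ⟨hsub F hF (Finset.mem_sdiff.mp ha).1, (Finset.mem_sdiff.mp ha).2⟩
  · have hmixed := mix_of_nc hex hev hnc
    obtain ⟨E, Fs⟩ := D
    simp only [SetSystem.directSum, SetSystem.mk.injEq]
    constructor
    · simp only [Finset.union_sdiff_self_eq_union]
      rw [Finset.union_comm]
      exact (Finset.union_eq_left.mpr hXE).symm
    · ext F
      simp only [Set.mem_setOf_eq]
      constructor
      · intro hF
        refine ⟨F ∩ X, ⟨F, hF, rfl⟩, F \ X, ⟨F, hF, rfl⟩, ?_⟩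
        ext a; simp only [Finset.mem_union, Finset.mem_inter, Finset.mem_sdiff]; tauto
      · rintro ⟨G₁, ⟨F₁, h₁, rfl⟩, G₂, ⟨F₂, h₂, rfl⟩, rfl⟩
        exact hmixed F₁ h₁ F₂ h₂

/-- generic symmDiff cancellation -/
lemma sd_sd (F s t : Finset α) : (F ∆ s) ∆ (F ∆ t) = s ∆ t := by
  ext a
  simp only [Finset.mem_symmDiff]
  tauto

/-- adjacency in the fundamental graph at `F` -/
def Adj (Fs : Set (Finset α)) (F : Finset α) (u v : α) : Prop :=
  u ≠ v ∧ F ∆ ({u, v} : Finset α) ∈ Fs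

/-- connectivity in the fundamental graph at `F` -/
def Conn (Fs : Set (Finset α)) (F : Finset α) : α → α → Prop :=
  Relation.ReflTransGen (Adj Fs F)

lemma adj_symm {Fs : Set (Finset α)} {F : Finset α} {u v : α} (h : Adj Fs F u v) :
    Adj Fs F v u := ⟨h.1.symm, by rw [Finset.pair_comm]; exact h.2⟩

lemma conn_symm {Fs : Set (Finset α)} {F : Finset α} {u v : α} (h : Conn Fs F u v) :
    Conn Fs F v u := by
  induction h with
  | refl => exact Relation.ReflTransGen.refl
  | tail _ hbc ih => exact (Relation.ReflTransGen.single (adj_symm hbc)).trans ih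

lemma adj_conn {Fs : Set (Finset α)} {F : Finset α} {u v : α} (h : Adj Fs F u v) :
    Conn Fs F u v := Relation.ReflTransGen.single h

lemma pair_sd_pair {w x y : α} (hwx : w ≠ x) (hwy : w ≠ y) (hxy : x ≠ y) :
    ({w, x} : Finset α) ∆ ({x, y} : Finset α) = {w, y} := by
  ext a
  simp only [Finset.mem_symmDiff, Finset.mem_insert, Finset.mem_singleton]
  by_cases haw : a = w <;> by_cases hax : a = x <;> by_cases hay : a = y <;>
    simp_all <;> tauto

/-- pivoting preserves adjacency up to connectivity -/
lemma pivot_adj {Fs : Set (Finset α)} (hex : Exch Fs) (hev : Evn Fs) {F : Finset α} {p q : α}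
    (hF : F ∈ Fs) (hF' : F ∆ ({p, q} : Finset α) ∈ Fs) (hpq : p ≠ q) :
    ∀ {u v : α}, Adj Fs F u v → Conn Fs (F ∆ ({p, q} : Finset α)) u v := by
  set F' := F ∆ ({p, q} : Finset α) with hF'def
  have hback : F' ∆ ({p, q} : Finset α) = F := symmDiff_symmDiff_cancel_right _ _
  have hApq : Adj Fs F' p q := ⟨hpq, by rw [hback]; exact hF⟩
  -- the case of an edge incident with p or q
  have hucase : ∀ {u v : α}, Adj Fs F u v → u = p ∨ u = q → Conn Fs F' u v := by
    rintro u v ⟨huv, hmem⟩ (rfl | rfl)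
    · by_cases hvq : v = q
      · subst hvq; exact adj_conn hApq
      · have heq : F' ∆ ({q, v} : Finset α) = F ∆ ({u, v} : Finset α) := by
          rw [hF'def, symmDiff_assoc, pair_sd_pair hpq huv (Ne.symm hvq)]
        have hA2 : Adj Fs F' q v := ⟨fun h => hvq h.symm, by rw [heq]; exact hmem⟩
        exact (adj_conn hApq).trans (adj_conn hA2)
    · by_cases hvp : v = p
      · subst hvp; exact conn_symm (adj_conn hApq)
      · have heq : F' ∆ ({p, v} : Finset α) = F ∆ ({u, v} : Finset α) := by
          rw [hF'def, symmDiff_assoc, Finset.pair_comm p u,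
            pair_sd_pair hpq.symm huv (Ne.symm hvp)]
        have hA2 : Adj Fs F' p v := ⟨fun h => hvp h.symm, by rw [heq]; exact hmem⟩
        exact (conn_symm (adj_conn hApq)).trans (adj_conn hA2)
  rintro u v hA
  obtain ⟨huv, hmem⟩ := hA
  by_cases hu : u = p ∨ u = q
  · exact hucase ⟨huv, hmem⟩ hu
  by_cases hv : v = p ∨ v = q
  · exact conn_symm (hucase (adj_symm ⟨huv, hmem⟩) hv)
  push_neg at hu hv
  obtain ⟨hup, huq⟩ := hu
  obtain ⟨hvp, hvq⟩ := hv
  by_cases hdir : F' ∆ ({u, v} : Finset α) ∈ Fs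
  · exact adj_conn ⟨huv, hdir⟩
  -- otherwise exchange from F'' := F ∆ {u,v} into F'
  have hdd : F' ∆ (F ∆ ({u, v} : Finset α)) = ({p, q} : Finset α) ∆ ({u, v} : Finset α) :=
    sd_sd F _ _
  have hmemd : ∀ w, w ∈ ({p, q} : Finset α) ∆ ({u, v} : Finset α) ↔
      (w = p ∨ w = q ∨ w = u ∨ w = v) := by
    intro w
    simp only [Finset.mem_symmDiff, Finset.mem_insert, Finset.mem_singleton]
    constructor
    · tauto
    · rintro (rfl | rfl | rfl | rfl)
      · exact Or.inl ⟨Or.inl rfl, fun h => h.elim hup.symm hvp.symm⟩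
      · exact Or.inl ⟨Or.inr rfl, fun h => h.elim huq.symm hvq.symm⟩
      · exact Or.inr ⟨Or.inl rfl, fun h => h.elim hup huq⟩
      · exact Or.inr ⟨Or.inr rfl, fun h => h.elim hvp hvq⟩
  have hstep : ∀ w : α, w = u ∨ w = v → ∃ z, (z = p ∨ z = q) ∧ Adj Fs F' w z := by
    rintro w hw
    have hwmem : w ∈ F' ∆ (F ∆ ({u, v} : Finset α)) := by
      rw [hdd, hmemd]; tauto
    obtain ⟨y, hy, hyw, hmy⟩ := exch2 hex hev hF' hmem hwmem
    rw [hdd, hmemd] at hy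
    have hy' : y = p ∨ y = q := by
      rcases hy with hyp | hyp | hyp | hyp
      · exact Or.inl hyp
      · exact Or.inr hyp
      · subst hyp
        rcases hw with rfl | rfl
        · exact absurd rfl hyw
        · exfalso; rw [Finset.pair_comm] at hmy; exact hdir hmy
      · subst hyp
        rcases hw with rfl | rfl
        · exfalso; exact hdir hmy
        · exact absurd rfl hyw
    exact ⟨y, hy', ⟨fun h => hyw h.symm, hmy⟩⟩
  obtain ⟨z₁, hz₁, hA₁⟩ := hstep u (Or.inl rfl)
  obtain ⟨z₂, hz₂, hA₂⟩ := hstep v (Or.inr rfl)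
  have hzz : Conn Fs F' z₁ z₂ := by
    rcases hz₁ with rfl | rfl <;> rcases hz₂ with rfl | rfl
    · exact Relation.ReflTransGen.refl
    · exact adj_conn hApq
    · exact conn_symm (adj_conn hApq)
    · exact Relation.ReflTransGen.refl
  exact (adj_conn hA₁).trans (hzz.trans (conn_symm (adj_conn hA₂)))

lemma pivot_conn {Fs : Set (Finset α)} (hex : Exch Fs) (hev : Evn Fs) {F : Finset α} {p q : α}
    (hF : F ∈ Fs) (hF' : F ∆ ({p, q} : Finset α) ∈ Fs) (hpq : p ≠ q) {u v : α}
    (h : Conn Fs F u v) : Conn Fs (F ∆ ({p, q} : Finset α)) u v := by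
  induction h with
  | refl => exact Relation.ReflTransGen.refl
  | tail _ hbc ih => exact ih.trans (pivot_adj hex hev hF hF' hpq hbc)

/-- connectivity is independent of the feasible basepoint -/
lemma conn_congr {Fs : Set (Finset α)} (hex : Exch Fs) (hev : Evn Fs) :
    ∀ {F F' : Finset α}, F ∈ Fs → F' ∈ Fs → ∀ {u v : α}, Conn Fs F u v → Conn Fs F' u v := by
  suffices h : ∀ n : ℕ, ∀ F F' : Finset α, F ∈ Fs → F' ∈ Fs → (F ∆ F').card = n →
      ∀ u v : α, Conn Fs F u v → Conn Fs F' u v by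
    intro F F' hF hF' u v hc; exact h _ F F' hF hF' rfl u v hc
  intro n
  induction n using Nat.strong_induction_on with
  | _ n ih =>
    intro F F' hF hF' hcard u v hc
    rcases Finset.eq_empty_or_nonempty (F ∆ F') with hemp | ⟨x, hx⟩
    · have hFF : F = F' := symmDiff_eq_bot.mp (by rw [Finset.bot_eq_empty]; exact hemp)
      exact hFF ▸ hc
    · obtain ⟨y, hy, hyx, hmem⟩ := exch2 hex hev hF hF' hx
      have hc2 : Conn Fs (F ∆ ({x, y} : Finset α)) u v :=
        pivot_conn hex hev hF hmem (fun h => hyx h.symm) hc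
      have hsub : ({x, y} : Finset α) ⊆ F ∆ F' := by
        intro a ha
        rcases Finset.mem_insert.mp ha with rfl | ha
        · exact hx
        · rwa [Finset.mem_singleton.mp ha]
      have hdiff : (F ∆ ({x, y} : Finset α)) ∆ F' = (F ∆ F') \ {x, y} := by
        ext a
        simp only [Finset.mem_symmDiff, Finset.mem_sdiff, Finset.mem_insert,
          Finset.mem_singleton]
        have hx' := Finset.mem_symmDiff.mp hx
        have hy' := Finset.mem_symmDiff.mp hy
        by_cases hax : a = x
        · subst hax; simp <;> tauto
        · by_cases hay : a = y
          · subst hay; simp <;> tauto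
          · simp [hax, hay] <;> tauto
      have hlt : ((F ∆ ({x, y} : Finset α)) ∆ F').card < n := by
        rw [hdiff, ← hcard]
        exact Finset.card_lt_card (Finset.sdiff_ssubset hsub ⟨x, Finset.mem_insert_self x _⟩)
      exact ih _ hlt _ _ hmem hF' rfl u v hc2

/-- in a connected delta-matroid the fundamental graph at every feasible set is connected -/
lemma conn_total {D : SetSystem α} (hex : Exch D.Fs) (hev : Evn D.Fs)
    (hsub : ∀ F ∈ D.Fs, F ⊆ D.E) (hConn : D.Connected) {F : Finset α} (hF : F ∈ D.Fs)
    {u v : α} (hu : u ∈ D.E) (hv : v ∈ D.E) : Conn D.Fs F u v := by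
  by_contra hcon
  set X : Finset α := D.E.filter (fun a => Conn D.Fs F u a) with hX
  have huX : u ∈ X := Finset.mem_filter.mpr ⟨hu, Relation.ReflTransGen.refl⟩
  have hvX : v ∉ X := fun h => hcon (Finset.mem_filter.mp h).2
  have hXE : X ⊆ D.E := Finset.filter_subset _ _
  have hnc : ∀ G ∈ D.Fs, ∀ a b, a ∈ X → b ∉ X → G ∆ ({a, b} : Finset α) ∈ D.Fs → False := by
    intro G hG a b haX hbX hmem
    have hab : a ≠ b := fun h => hbX (h ▸ haX)
    have hconn : Conn D.Fs F a b := conn_congr hex hev hG hF (adj_conn ⟨hab, hmem⟩)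
    have hbE : b ∈ D.E := by
      by_cases hbG : b ∈ G
      · exact hsub G hG hbG
      · refine hsub _ hmem ?_
        rw [Finset.mem_symmDiff]
        exact Or.inr ⟨Finset.mem_insert.mpr (Or.inr (Finset.mem_singleton_self b)), hbG⟩
    exact hbX (Finset.mem_filter.mpr ⟨hbE, (Finset.mem_filter.mp haX).2.trans hconn⟩)
  exact hConn ⟨X, sep_of_nc hex hev hsub hXE hnc, ⟨u, huX⟩, fun h => hvX (h ▸ hv)⟩

/-- a loop yields the separator `{e}` -/
lemma loop_sep {D : SetSystem α} (hsub : ∀ F ∈ D.Fs, F ⊆ D.E) {e : α} (he : e ∈ D.E)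
    (hl : D.IsLoop e) : D.IsSeparator {e} := by
  refine ⟨Finset.singleton_subset_iff.mpr he, ⟨{e}, {∅}⟩, ⟨D.E \ {e}, D.Fs⟩, rfl, rfl, ?_, ?_, ?_⟩
  · rintro F hF
    rw [Set.mem_singleton_iff.mp hF]
    exact Finset.empty_subset _
  · intro F hF a ha
    exact Finset.mem_sdiff.mpr ⟨hsub F hF ha, fun h => hl F hF (Finset.mem_singleton.mp h ▸ ha)⟩
  · obtain ⟨E, Fs⟩ := D
    simp only [SetSystem.directSum, SetSystem.mk.injEq]
    refine ⟨?_, ?_⟩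
    · rw [Finset.union_comm]
      exact (Finset.sdiff_union_of_subset (Finset.singleton_subset_iff.mpr he)).symm
    · ext F
      simp only [Set.mem_setOf_eq, Set.mem_singleton_iff]
      constructor
      · intro hF; exact ⟨∅, rfl, F, hF, (Finset.empty_union F).symm⟩
      · rintro ⟨F₁, rfl, F₂, hF₂, rfl⟩
        rwa [Finset.empty_union]

/-- a coloop yields the separator `{e}` -/
lemma coloop_sep {D : SetSystem α} (hsub : ∀ F ∈ D.Fs, F ⊆ D.E) {e : α} (he : e ∈ D.E)
    (hl : D.IsColoop e) : D.IsSeparator {e} := by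
  refine ⟨Finset.singleton_subset_iff.mpr he, ⟨{e}, {{e}}⟩,
    ⟨D.E \ {e}, {G | ∃ F ∈ D.Fs, G = F.erase e}⟩, rfl, rfl, ?_, ?_, ?_⟩
  · rintro F hF
    rw [Set.mem_singleton_iff.mp hF]
  · rintro G ⟨F, hF, rfl⟩ a ha
    rw [Finset.mem_erase] at ha
    exact Finset.mem_sdiff.mpr ⟨hsub F hF ha.2, fun h => ha.1 (Finset.mem_singleton.mp h)⟩
  · obtain ⟨E, Fs⟩ := D
    simp only [SetSystem.directSum, SetSystem.mk.injEq]
    refine ⟨?_, ?_⟩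
    · rw [Finset.union_comm]
      exact (Finset.sdiff_union_of_subset (Finset.singleton_subset_iff.mpr he)).symm
    · ext F
      simp only [Set.mem_setOf_eq, Set.mem_singleton_iff]
      constructor
      · intro hF
        refine ⟨{e}, rfl, F.erase e, ⟨F, hF, rfl⟩, ?_⟩
        ext a
        simp only [Finset.mem_union, Finset.mem_singleton, Finset.mem_erase]
        constructor
        · intro h
          by_cases hae : a = e
          · exact Or.inl hae
          · exact Or.inr ⟨hae, h⟩
        · rintro (rfl | ⟨_, h⟩)
          · exact hl F hF
          · exact h
      · rintro ⟨F₁, rfl, G, ⟨F₂, hF₂, rfl⟩, rfl⟩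
        have : ({e} : Finset α) ∪ F₂.erase e = F₂ := by
          ext a
          simp only [Finset.mem_union, Finset.mem_singleton, Finset.mem_erase]
          constructor
          · rintro (rfl | ⟨_, h⟩)
            · exact hl F₂ hF₂
            · exact h
          · intro h
            by_cases hae : a = e
            · exact Or.inl hae
            · exact Or.inr ⟨hae, h⟩
        rwa [this]

/-- four distinct elements: pair symmetric-difference regrouping -/
lemma pair4 {e u a w : α} (heu : e ≠ u) (hea : e ≠ a) (hew : e ≠ w) (hua : u ≠ a)
    (huw : u ≠ w) (haw : a ≠ w) :
    ({e, u} : Finset α) ∆ ({w, a} : Finset α) = ({e, a} : Finset α) ∆ ({u, w} : Finset α) := by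
  ext b
  simp only [Finset.mem_symmDiff, Finset.mem_insert, Finset.mem_singleton]
  by_cases hbe : b = e <;> by_cases hbu : b = u <;> by_cases hba : b = a <;>
    by_cases hbw : b = w <;> simp_all <;> tauto

/-- walking to `e` inside a part yields a neighbour of `e` in that part -/
lemma reach_e {Fs : Set (Finset α)} {F : Finset α} {Z : Finset α} {e : α} (heZ : e ∉ Z)
    (hstay : ∀ u v, u ∈ Z → v ≠ e → Adj Fs F u v → v ∈ Z)
    {w : α} (hw : w ∈ Z) (hc : Conn Fs F w e) :
    ∃ u ∈ Z, F ∆ ({e, u} : Finset α) ∈ Fs := by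
  induction hc using Relation.ReflTransGen.head_induction_on with
  | refl => exact absurd hw heZ
  | head hadj _ ih =>
    rename_i x y _
    by_cases hye : y = e
    · subst hye
      exact ⟨x, hw, by rw [Finset.pair_comm]; exact hadj.2⟩
    · exact ih (hstay x y hw hye hadj)

end ChainEvenAux

set_option maxHeartbeats 2000000

/-- **Chain theorem for even delta-matroids.** Let `D` be a connected even delta-matroid.
If `e ∈ E(D)`, then `D∖e` or `D/e` is connected. -/
theorem chain_even_delta_matroid {α : Type*} [DecidableEq α]
    (D : SetSystem α) (hD : D.IsDeltaMatroid) (hEven : D.IsEven)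
    (hConn : D.Connected) (e : α) (he : e ∈ D.E) :
    (D.delete e).Connected ∨ (D.contract e).Connected := by
  classical
  obtain ⟨hne, hsub, hexD⟩ := hD
  have hex : ChainEvenAux.Exch D.Fs := hexD
  have hev : ChainEvenAux.Evn D.Fs := hEven
  by_cases hsing : ∀ x ∈ D.E, x = e
  · -- trivial case: the ground set is `{e}`
    left
    rintro ⟨X, hsep, ⟨x, hx⟩, -⟩
    have hXsub : X ⊆ (D.delete e).E := hsep.1
    have hdelE : (D.delete e).E = D.E.erase e := by
      unfold SetSystem.delete
      split <;> rfl
    have hxmem : x ∈ D.E.erase e := hdelE ▸ hXsub hx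
    rw [Finset.mem_erase] at hxmem
    exact hxmem.1 (hsing x hxmem.2)
  push_neg at hsing
  obtain ⟨f, hfE, hfe⟩ := hsing
  -- `e` is neither a loop nor a coloop
  have hEne : ({e} : Finset α) ≠ D.E := fun h => hfe (Finset.mem_singleton.mp (h ▸ hfE))
  have hnl : ¬ D.IsLoop e := fun hl =>
    hConn ⟨{e}, ChainEvenAux.loop_sep hsub he hl, ⟨e, Finset.mem_singleton_self e⟩, hEne⟩
  have hnco : ¬ D.IsColoop e := fun hl =>
    hConn ⟨{e}, ChainEvenAux.coloop_sep hsub he hl, ⟨e, Finset.mem_singleton_self e⟩, hEne⟩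
  simp only [SetSystem.delete, SetSystem.contract, if_neg hnco, if_neg hnl]
  by_contra hboth
  push_neg at hboth
  obtain ⟨hdn, hcn⟩ := hboth
  obtain ⟨A, hsepA, ⟨a₀, ha₀⟩, hAne⟩ := not_not.mp hdn
  obtain ⟨C, hsepC, ⟨c₀, hc₀⟩, hCne⟩ := not_not.mp hcn
  set Er : Finset α := D.E.erase e with hEr
  have hAsub : A ⊆ Er := hsepA.1
  have hCsub : C ⊆ Er := hsepC.1
  set B : Finset α := Er \ A with hB
  set D' : Finset α := Er \ C with hD'
  have hBne : B.Nonempty := by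
    rcases Finset.eq_empty_or_nonempty B with h | h
    · exact absurd (Finset.Subset.antisymm hAsub (Finset.sdiff_eq_empty_iff_subset.mp h)) hAne
    · exact h
  have hD'ne : D'.Nonempty := by
    rcases Finset.eq_empty_or_nonempty D' with h | h
    · exact absurd (Finset.Subset.antisymm hCsub (Finset.sdiff_eq_empty_iff_subset.mp h)) hCne
    · exact h
  -- membership helpers
  have hBEr : ∀ {x : α}, x ∈ B → x ∈ Er := fun h => (Finset.mem_sdiff.mp h).1
  have hD'Er : ∀ {x : α}, x ∈ D' → x ∈ Er := fun h => (Finset.mem_sdiff.mp h).1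
  have hErne : ∀ {x : α}, x ∈ Er → x ≠ e := fun h => (Finset.mem_erase.mp h).1
  have hErE : ∀ {x : α}, x ∈ Er → x ∈ D.E := fun h => (Finset.mem_erase.mp h).2
  have hABside : ∀ {x : α}, x ∈ Er → x ∉ A → x ∈ B := fun hx hnA => Finset.mem_sdiff.mpr ⟨hx, hnA⟩
  have hCDside : ∀ {x : α}, x ∈ Er → x ∉ C → x ∈ D' := fun hx hnC => Finset.mem_sdiff.mpr ⟨hx, hnC⟩
  have hABne2 : ∀ {x y : α}, (x ∈ A ∧ y ∈ B) ∨ (x ∈ B ∧ y ∈ A) → x ≠ y := by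
    rintro x y (⟨h1, h2⟩ | ⟨h1, h2⟩) rfl
    · exact (Finset.mem_sdiff.mp h2).2 h1
    · exact (Finset.mem_sdiff.mp h1).2 h2
  have hCDne2 : ∀ {x y : α}, (x ∈ C ∧ y ∈ D') ∨ (x ∈ D' ∧ y ∈ C) → x ≠ y := by
    rintro x y (⟨h1, h2⟩ | ⟨h1, h2⟩) rfl
    · exact (Finset.mem_sdiff.mp h2).2 h1
    · exact (Finset.mem_sdiff.mp h1).2 h2
  have hABEr : ∀ {x y : α}, (x ∈ A ∧ y ∈ B) ∨ (x ∈ B ∧ y ∈ A) → x ∈ Er ∧ y ∈ Er := by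
    rintro x y (⟨h1, h2⟩ | ⟨h1, h2⟩)
    · exact ⟨hAsub h1, hBEr h2⟩
    · exact ⟨hBEr h1, hAsub h2⟩
  have hCDEr : ∀ {x y : α}, (x ∈ C ∧ y ∈ D') ∨ (x ∈ D' ∧ y ∈ C) → x ∈ Er ∧ y ∈ Er := by
    rintro x y (⟨h1, h2⟩ | ⟨h1, h2⟩)
    · exact ⟨hCsub h1, hD'Er h2⟩
    · exact ⟨hD'Er h1, hCsub h2⟩
  -- evenness of the two minors
  have hevdel : ChainEvenAux.Evn (D.del₀ e).Fs := fun F₁ h₁ F₂ h₂ => hEven F₁ h₁.1 F₂ h₂.1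
  have hevcon : ChainEvenAux.Evn (D.con₀ e).Fs := by
    rintro F₁ ⟨G₁, hG₁, he₁, rfl⟩ F₂ ⟨G₂, hG₂, he₂, rfl⟩
    rw [Finset.card_erase_of_mem he₁, Finset.card_erase_of_mem he₂]
    have h1 := Finset.card_pos.mpr ⟨e, he₁⟩
    have h2 := Finset.card_pos.mpr ⟨e, he₂⟩
    have h3 := hEven G₁ hG₁ G₂ hG₂
    omega
  -- no crossing edges in the two minors
  have hcrossAB : ∀ F ∈ D.Fs, e ∉ F → ∀ u v, (u ∈ A ∧ v ∈ B) ∨ (u ∈ B ∧ v ∈ A) →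
      F ∆ ({u, v} : Finset α) ∈ D.Fs → False := by
    intro F hF heF u v hor hmem
    obtain ⟨huEr, hvEr⟩ := hABEr hor
    have hemem : e ∉ F ∆ ({u, v} : Finset α) := by
      rw [Finset.mem_symmDiff]
      rintro (⟨h, -⟩ | ⟨h, -⟩)
      · exact heF h
      · rcases Finset.mem_insert.mp h with h' | h'
        · exact hErne huEr h'.symm
        · exact hErne hvEr (Finset.mem_singleton.mp h').symm
    rcases hor with ⟨huA, hvB⟩ | ⟨huB, hvA⟩
    · exact ChainEvenAux.nc_of_sep hevdel hsepA F ⟨hF, heF⟩ u v huA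
        (Finset.mem_sdiff.mp hvB).2 ⟨hmem, hemem⟩
    · rw [Finset.pair_comm] at hmem hemem
      exact ChainEvenAux.nc_of_sep hevdel hsepA F ⟨hF, heF⟩ v u hvA
        (Finset.mem_sdiff.mp huB).2 ⟨hmem, hemem⟩
  have heraseSD : ∀ (G : Finset α) (u v : α), u ≠ e → v ≠ e →
      (G.erase e) ∆ ({u, v} : Finset α) = (G ∆ ({u, v} : Finset α)).erase e := by
    intro G u v hu hv
    ext b
    simp only [Finset.mem_symmDiff, Finset.mem_erase, Finset.mem_insert, Finset.mem_singleton]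
    by_cases hbe : b = e
    · subst hbe
      simp [Ne.symm hu, Ne.symm hv] <;> tauto
    · simp [hbe] <;> tauto
  have hcrossCD : ∀ G ∈ D.Fs, e ∈ G → ∀ u v, (u ∈ C ∧ v ∈ D') ∨ (u ∈ D' ∧ v ∈ C) →
      G ∆ ({u, v} : Finset α) ∈ D.Fs → False := by
    intro G hG heG u v hor hmem
    obtain ⟨huEr, hvEr⟩ := hCDEr hor
    have hemem : e ∈ G ∆ ({u, v} : Finset α) := by
      rw [Finset.mem_symmDiff]
      refine Or.inl ⟨heG, fun h => ?_⟩
      rcases Finset.mem_insert.mp h with h' | h'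
      · exact hErne huEr h'.symm
      · exact hErne hvEr (Finset.mem_singleton.mp h').symm
    have hGmem : G.erase e ∈ (D.con₀ e).Fs := ⟨G, hG, heG, rfl⟩
    have hmem' : (G.erase e) ∆ ({u, v} : Finset α) ∈ (D.con₀ e).Fs :=
      ⟨G ∆ ({u, v} : Finset α), hmem, hemem, heraseSD G u v (hErne huEr) (hErne hvEr)⟩
    rcases hor with ⟨huC, hvD⟩ | ⟨huD, hvC⟩
    · exact ChainEvenAux.nc_of_sep hevcon hsepC _ hGmem u v huC
        (Finset.mem_sdiff.mp hvD).2 hmem'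
    · rw [Finset.pair_comm] at hmem'
      exact ChainEvenAux.nc_of_sep hevcon hsepC _ hGmem v u hvC
        (Finset.mem_sdiff.mp huD).2 hmem'
  -- a feasible pivot pair on e
  obtain ⟨Fh, hFh⟩ := hne
  have hconnEF : ChainEvenAux.Conn D.Fs Fh e f :=
    ChainEvenAux.conn_total hex hev hsub hConn hFh he hfE
  obtain ⟨b, hadjb, -⟩ :=
    (Relation.ReflTransGen.cases_head hconnEF).resolve_left (fun h => hfe h.symm)
  obtain ⟨hbe, hbmem⟩ := hadjb
  have hpair : ∃ F₀ a, F₀ ∈ D.Fs ∧ e ∉ F₀ ∧ a ≠ e ∧ F₀ ∆ ({e, a} : Finset α) ∈ D.Fs := by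
    by_cases heFh : e ∈ Fh
    · refine ⟨Fh ∆ ({e, b} : Finset α), b, hbmem, ?_, fun h => hbe h.symm, ?_⟩
      · rw [Finset.mem_symmDiff]
        rintro (⟨-, h⟩ | ⟨-, h⟩)
        · exact h (Finset.mem_insert_self e _)
        · exact h heFh
      · rw [symmDiff_symmDiff_cancel_right]
        exact hFh
    · exact ⟨Fh, b, hFh, heFh, fun h => hbe h.symm, hbmem⟩
  obtain ⟨F₀, a, hF₀, heF₀, hane, hF₁mem⟩ := hpair
  set F₁ : Finset α := F₀ ∆ ({e, a} : Finset α) with hF₁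
  have heF₁ : e ∈ F₁ := Finset.mem_symmDiff.mpr (Or.inr ⟨Finset.mem_insert_self e _, heF₀⟩)
  have haE : a ∈ D.E := by
    by_cases haF₀ : a ∈ F₀
    · exact hsub _ hF₀ haF₀
    · refine hsub _ hF₁mem (Finset.mem_symmDiff.mpr (Or.inr ⟨?_, haF₀⟩))
      exact Finset.mem_insert.mpr (Or.inr (Finset.mem_singleton_self a))
  have haEr : a ∈ Er := Finset.mem_erase.mpr ⟨hane, haE⟩
  -- all neighbours of e at F₀ lie on one side of (C, D'), similarly for F₁ and (A, B)
  have hsameN0 : ∀ x y, x ≠ e → y ≠ e → x ≠ y → F₀ ∆ ({e, x} : Finset α) ∈ D.Fs →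
      F₀ ∆ ({e, y} : Finset α) ∈ D.Fs → ((x ∈ C ∧ y ∈ D') ∨ (x ∈ D' ∧ y ∈ C)) → False := by
    intro x y hxe hye hxy hmx hmy hor
    have heG : e ∈ F₀ ∆ ({e, x} : Finset α) :=
      Finset.mem_symmDiff.mpr (Or.inr ⟨Finset.mem_insert_self e _, heF₀⟩)
    have heq : (F₀ ∆ ({e, x} : Finset α)) ∆ ({x, y} : Finset α) = F₀ ∆ ({e, y} : Finset α) := by
      rw [symmDiff_assoc, ChainEvenAux.pair_sd_pair (Ne.symm hxe) (Ne.symm hye) hxy]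
    exact hcrossCD _ hmx heG x y hor (by rw [heq]; exact hmy)
  have hsameN1 : ∀ x y, x ≠ e → y ≠ e → x ≠ y → F₁ ∆ ({e, x} : Finset α) ∈ D.Fs →
      F₁ ∆ ({e, y} : Finset α) ∈ D.Fs → ((x ∈ A ∧ y ∈ B) ∨ (x ∈ B ∧ y ∈ A)) → False := by
    intro x y hxe hye hxy hmx hmy hor
    have heG : e ∉ F₁ ∆ ({e, x} : Finset α) := by
      rw [Finset.mem_symmDiff]
      rintro (⟨h, h'⟩ | ⟨h, h'⟩)
      · exact h' (Finset.mem_insert_self e _)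
      · exact h' heF₁
    have heq : (F₁ ∆ ({e, x} : Finset α)) ∆ ({x, y} : Finset α) = F₁ ∆ ({e, y} : Finset α) := by
      rw [symmDiff_assoc, ChainEvenAux.pair_sd_pair (Ne.symm hxe) (Ne.symm hye) hxy]
    exact hcrossAB _ hmx heG x y hor (by rw [heq]; exact hmy)
  -- four "stay on your side" facts and the reach lemma
  have hvE : ∀ {F u v : _}, F ∈ D.Fs → F ∆ ({u, v} : Finset α) ∈ D.Fs → v ∈ D.E := by
    intro F u v hF hmem
    by_cases hvF : v ∈ F
    · exact hsub _ hF hvF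
    · exact hsub _ hmem (Finset.mem_symmDiff.mpr (Or.inr
        ⟨Finset.mem_insert.mpr (Or.inr (Finset.mem_singleton_self v)), hvF⟩))
  have hreach : ∀ (Z : Finset α), Z ⊆ Er →
      (∀ u v, u ∈ Z → v ≠ e → ChainEvenAux.Adj D.Fs F₀ u v → v ∈ Z) →
      ∀ w ∈ Z, ∃ u ∈ Z, F₀ ∆ ({e, u} : Finset α) ∈ D.Fs := by
    intro Z hZEr hstay w hw
    exact ChainEvenAux.reach_e (fun h => hErne (hZEr h) rfl) hstay hw
      (ChainEvenAux.conn_total hex hev hsub hConn hF₀ (hErE (hZEr hw)) he)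
  have hreach1 : ∀ (Z : Finset α), Z ⊆ Er →
      (∀ u v, u ∈ Z → v ≠ e → ChainEvenAux.Adj D.Fs F₁ u v → v ∈ Z) →
      ∀ w ∈ Z, ∃ u ∈ Z, F₁ ∆ ({e, u} : Finset α) ∈ D.Fs := by
    intro Z hZEr hstay w hw
    exact ChainEvenAux.reach_e (fun h => hErne (hZEr h) rfl) hstay hw
      (ChainEvenAux.conn_total hex hev hsub hConn hF₁mem (hErE (hZEr hw)) he)
  have hstayA : ∀ u v, u ∈ A → v ≠ e → ChainEvenAux.Adj D.Fs F₀ u v → v ∈ A := by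
    rintro u v hu hve ⟨huv, hmem⟩
    by_contra hvA
    exact hcrossAB F₀ hF₀ heF₀ u v (Or.inl ⟨hu, hABside
      (Finset.mem_erase.mpr ⟨hve, hvE hF₀ hmem⟩) hvA⟩) hmem
  have hstayB : ∀ u v, u ∈ B → v ≠ e → ChainEvenAux.Adj D.Fs F₀ u v → v ∈ B := by
    rintro u v hu hve ⟨huv, hmem⟩
    have hvEr : v ∈ Er := Finset.mem_erase.mpr ⟨hve, hvE hF₀ hmem⟩
    by_contra hvB
    have hvA : v ∈ A := by
      by_contra hvA
      exact hvB (hABside hvEr hvA)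
    exact hcrossAB F₀ hF₀ heF₀ u v (Or.inr ⟨hu, hvA⟩) hmem
  have hstayC : ∀ u v, u ∈ C → v ≠ e → ChainEvenAux.Adj D.Fs F₁ u v → v ∈ C := by
    rintro u v hu hve ⟨huv, hmem⟩
    by_contra hvC
    exact hcrossCD F₁ hF₁mem heF₁ u v (Or.inl ⟨hu, hCDside
      (Finset.mem_erase.mpr ⟨hve, hvE hF₁mem hmem⟩) hvC⟩) hmem
  have hstayD' : ∀ u v, u ∈ D' → v ≠ e → ChainEvenAux.Adj D.Fs F₁ u v → v ∈ D' := by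
    rintro u v hu hve ⟨huv, hmem⟩
    have hvEr : v ∈ Er := Finset.mem_erase.mpr ⟨hve, hvE hF₁mem hmem⟩
    by_contra hvD
    have hvC : v ∈ C := by
      by_contra hvC
      exact hvD (hCDside hvEr hvC)
    exact hcrossCD F₁ hF₁mem heF₁ u v (Or.inr ⟨hu, hvC⟩) hmem
  -- pick the neighbours u* (opposite (A,B)-side of a at F₀) and w* (opposite (C,D')-side at F₁)
  obtain ⟨uA, huA, hNuA⟩ := hreach A hAsub hstayA a₀ ha₀
  obtain ⟨uB, huB, hNuB⟩ := hreach B (fun x h => hBEr h) hstayB hBne.choose hBne.choose_spec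
  obtain ⟨wC, hwC, hNwC⟩ := hreach1 C hCsub hstayC c₀ hc₀
  obtain ⟨wD, hwD, hNwD⟩ := hreach1 D' (fun x h => hD'Er h) hstayD' hD'ne.choose hD'ne.choose_spec
  have hchoice : ∃ us ws, F₀ ∆ ({e, us} : Finset α) ∈ D.Fs ∧ F₁ ∆ ({e, ws} : Finset α) ∈ D.Fs ∧
      ((a ∈ A ∧ us ∈ B) ∨ (a ∈ B ∧ us ∈ A)) ∧ ((a ∈ C ∧ ws ∈ D') ∨ (a ∈ D' ∧ ws ∈ C)) := by
    by_cases haA : a ∈ A <;> by_cases haC : a ∈ C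
    · exact ⟨uB, wD, hNuB, hNwD, Or.inl ⟨haA, huB⟩, Or.inl ⟨haC, hwD⟩⟩
    · exact ⟨uB, wC, hNuB, hNwC, Or.inl ⟨haA, huB⟩, Or.inr ⟨hCDside haEr haC, hwC⟩⟩
    · exact ⟨uA, wD, hNuA, hNwD, Or.inr ⟨hABside haEr haA, huA⟩, Or.inl ⟨haC, hwD⟩⟩
    · exact ⟨uA, wC, hNuA, hNwC, Or.inr ⟨hABside haEr haA, huA⟩,
        Or.inr ⟨hCDside haEr haC, hwC⟩⟩
  obtain ⟨us, ws, hNus, hNws, hoppABaus, hoppCDaws⟩ := hchoice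
  -- basic distinctness and side bookkeeping
  have hausne : a ≠ us := hABne2 hoppABaus
  have hawsne : a ≠ ws := hCDne2 hoppCDaws
  have husEr : us ∈ Er := (hABEr hoppABaus).2
  have hwsEr : ws ∈ Er := (hCDEr hoppCDaws).2
  have husne : us ≠ e := hErne husEr
  have hwsne : ws ≠ e := hErne hwsEr
  -- `us` and `ws` are on opposite sides of both partitions
  have hoppCDusws : (us ∈ C ∧ ws ∈ D') ∨ (us ∈ D' ∧ ws ∈ C) := by
    rcases hoppCDaws with ⟨haC, hwsD⟩ | ⟨haD, hwsC⟩
    · by_cases husC : us ∈ C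
      · exact Or.inl ⟨husC, hwsD⟩
      · exact absurd (hsameN0 a us hane husne hausne hF₁mem hNus
          (Or.inl ⟨haC, hCDside husEr husC⟩)) not_false
    · by_cases husC : us ∈ C
      · exact absurd (hsameN0 a us hane husne hausne hF₁mem hNus
          (Or.inr ⟨haD, husC⟩)) not_false
      · exact Or.inr ⟨hCDside husEr husC, hwsC⟩
  have hoppABusws : (us ∈ A ∧ ws ∈ B) ∨ (us ∈ B ∧ ws ∈ A) := by
    have hNwa : F₁ ∆ ({e, a} : Finset α) ∈ D.Fs := by
      rw [hF₁, symmDiff_symmDiff_cancel_right]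
      exact hF₀
    rcases hoppABaus with ⟨haA, husB⟩ | ⟨haB, husA⟩
    · by_cases hwsA : ws ∈ A
      · exact Or.inr ⟨husB, hwsA⟩
      · exact absurd (hsameN1 a ws hane hwsne hawsne hNwa hNws
          (Or.inl ⟨haA, hABside hwsEr hwsA⟩)) not_false
    · by_cases hwsA : ws ∈ A
      · exact absurd (hsameN1 a ws hane hwsne hawsne hNwa hNws
          (Or.inr ⟨haB, hwsA⟩)) not_false
      · exact Or.inl ⟨husA, hABside hwsEr hwsA⟩
  have huswsne : us ≠ ws := hABne2 hoppABusws
  -- the final exchange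
  set F₂ : Finset α := F₀ ∆ ({e, us} : Finset α) with hF₂
  have hF₃eq : F₁ ∆ ({e, ws} : Finset α) = F₀ ∆ ({a, ws} : Finset α) := by
    rw [hF₁, symmDiff_assoc, Finset.pair_comm e a,
      ChainEvenAux.pair_sd_pair hane hawsne (Ne.symm hwsne)]
  set F₃ : Finset α := F₀ ∆ ({a, ws} : Finset α) with hF₃def
  have hF₃mem : F₃ ∈ D.Fs := by rw [← hF₃eq]; exact hNws
  have hwsd : ws ∈ F₂ ∆ F₃ := by
    have hd : F₂ ∆ F₃ = ({e, us} : Finset α) ∆ ({a, ws} : Finset α) :=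
      ChainEvenAux.sd_sd F₀ _ _
    rw [hd, Finset.mem_symmDiff]
    have h1 : ws ∉ ({e, us} : Finset α) := by
      rw [Finset.mem_insert, Finset.mem_singleton]
      rintro (h | h)
      · exact hwsne h
      · exact huswsne h.symm
    have h2 : ws ∈ ({a, ws} : Finset α) :=
      Finset.mem_insert.mpr (Or.inr (Finset.mem_singleton_self ws))
    exact Or.inr ⟨h2, h1⟩
  obtain ⟨y, hyd, hyne, hymem⟩ := ChainEvenAux.exch2 hex hev hNus hF₃mem hwsd
  have hycases : y = e ∨ y = us ∨ y = a ∨ y = ws := by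
    have hd : F₂ ∆ F₃ = ({e, us} : Finset α) ∆ ({a, ws} : Finset α) :=
      ChainEvenAux.sd_sd F₀ _ _
    rw [hd, Finset.mem_symmDiff, Finset.mem_insert, Finset.mem_insert,
      Finset.mem_singleton, Finset.mem_singleton] at hyd
    tauto
  rcases hycases with hy | hy | hy | hy
  · -- y = e : an (A,B)-crossing edge at F₀
    rw [hy] at hymem
    have heq1 : F₂ ∆ ({ws, e} : Finset α) = F₀ ∆ ({us, ws} : Finset α) := by
      rw [hF₂, symmDiff_assoc, Finset.pair_comm ws e, Finset.pair_comm e us,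
        ChainEvenAux.pair_sd_pair husne huswsne (Ne.symm hwsne)]
    exact hcrossAB F₀ hF₀ heF₀ us ws hoppABusws (by rw [← heq1]; exact hymem)
  · -- y = us : ws is also a neighbour of e at F₀
    rw [hy] at hymem
    have heq2 : F₂ ∆ ({ws, us} : Finset α) = F₀ ∆ ({e, ws} : Finset α) := by
      rw [hF₂, symmDiff_assoc, Finset.pair_comm ws us,
        ChainEvenAux.pair_sd_pair (Ne.symm husne) (Ne.symm hwsne) huswsne]
    exact hsameN0 a ws hane hwsne hawsne hF₁mem (by rw [← heq2]; exact hymem) hoppCDaws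
  · -- y = a : a (C,D')-crossing edge at F₁
    rw [hy] at hymem
    have heq3 : F₂ ∆ ({ws, a} : Finset α) = F₁ ∆ ({us, ws} : Finset α) := by
      rw [hF₂, hF₁, symmDiff_assoc, symmDiff_assoc,
        ChainEvenAux.pair4 (Ne.symm husne) (Ne.symm hane) (Ne.symm hwsne)
          (Ne.symm hausne) huswsne hawsne]
    exact hcrossCD F₁ hF₁mem heF₁ us ws hoppCDusws (by rw [← heq3]; exact hymem)
  · exact hyne hy
end
end

section
/- Let Q = (U, Ω, r) be a non-degenerate multimatroid, let A be a subtransversal of Ω, and let e be an element of A satisfying r({e}) = 1. Then there is an independent subtransversal I of Q such that e ∈ I and Q|A = Q|I (the two minors have the same skew classes and the same rank function). -/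
noncomputable section
open scoped Classical

/-- The data of a multimatroid: a finite ground set `U`, a partition `Ω` of `U` into
nonempty skew classes, and a rank function `r` (only its values on subtransversals matter). -/
structure MultimatroidData (α : Type*) [DecidableEq α] where
  U : Finset α
  Ω : Finset (Finset α)
  r : Finset α → ℕ
  classes_nonempty : ∀ ω ∈ Ω, ω.Nonempty
  classes_subset : ∀ ω ∈ Ω, ω ⊆ U
  classes_cover : ∀ x ∈ U, ∃ ω ∈ Ω, x ∈ ω
  classes_disjoint : ∀ ω₁ ∈ Ω, ∀ ω₂ ∈ Ω, ω₁ ≠ ω₂ → Disjoint ω₁ ω₂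

variable {α : Type*} [DecidableEq α]

/-- A subtransversal: a set meeting each skew class in at most one element. -/
def MultimatroidData.Subtr (Q : MultimatroidData α) (A : Finset α) : Prop :=
  A ⊆ Q.U ∧ ∀ ω ∈ Q.Ω, (A ∩ ω).card ≤ 1

/-- A multimatroid: the rank function satisfies axioms (1)–(4). -/
structure Multimatroid (α : Type*) [DecidableEq α] extends MultimatroidData α where
  rank_empty : r ∅ = 0
  rank_step : ∀ A x ω, toMultimatroidData.Subtr A → ω ∈ Ω → x ∈ ω → Disjoint ω A →
    r A ≤ r (insert x A) ∧ r (insert x A) ≤ r A + 1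
  rank_submod : ∀ A B, toMultimatroidData.Subtr (A ∪ B) →
    r (A ∪ B) + r (A ∩ B) ≤ r A + r B
  rank_skew : ∀ A x y ω, toMultimatroidData.Subtr A → ω ∈ Ω → x ∈ ω → y ∈ ω → x ≠ y →
    Disjoint ω A → 2 * r A + 1 ≤ r (insert x A) + r (insert y A)

namespace Multimatroid

variable (Q : Multimatroid α)

/-- Subtransversals of a multimatroid. -/
def Subtr (A : Finset α) : Prop := Q.toMultimatroidData.Subtr A

/-- The skew classes of the minor `Q|A`: those skew classes of `Q` disjoint from `A`. -/
def minorClasses (A : Finset α) : Finset (Finset α) := Q.Ω.filter fun ω => Disjoint ω A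

/-- The ground set of the minor `Q|A`. -/
def minorGround (A : Finset α) : Finset α := (Q.minorClasses A).biUnion id

/-- Subtransversals of the minor `Q|A`. -/
def MinorSubtr (A S : Finset α) : Prop :=
  S ⊆ Q.minorGround A ∧ ∀ ω ∈ Q.minorClasses A, (S ∩ ω).card ≤ 1

/-- `X` is a separator of the minor `Q|A` (whose rank function is
`S ↦ r(S ∪ A) − r(A)`, here expressed additively). -/
def IsMinorSeparator (A X : Finset α) : Prop :=
  X ⊆ Q.minorGround A ∧ (∀ ω ∈ Q.minorClasses A, ω ⊆ X ∨ Disjoint ω X) ∧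
  ∀ S, Q.MinorSubtr A S →
    Q.r (S ∪ A) + Q.r A = Q.r ((S ∩ X) ∪ A) + Q.r ((S \ X) ∪ A)

/-- The minor `Q|A` is connected: it has no proper separator. -/
def MinorConnected (A : Finset α) : Prop :=
  ¬ ∃ X, Q.IsMinorSeparator A X ∧ X.Nonempty ∧ X ≠ Q.minorGround A

/-- `X` is a separator of `Q`: a union of skew classes such that the rank is additive
over the partition `(X, U − X)`. -/
def IsSeparator (X : Finset α) : Prop :=
  X ⊆ Q.U ∧ (∀ ω ∈ Q.Ω, ω ⊆ X ∨ Disjoint ω X) ∧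
  ∀ S, Q.Subtr S → Q.r S = Q.r (S ∩ X) + Q.r (S \ X)

/-- `Q` is connected: it has no proper separator. -/
def Connected : Prop := ¬ ∃ X, Q.IsSeparator X ∧ X.Nonempty ∧ X ≠ Q.U

/-- `A` is a near-transversal avoiding the skew class `ω`: a subtransversal disjoint
from `ω` meeting every other skew class. -/
def NearTransversalAvoiding (ω A : Finset α) : Prop :=
  Q.Subtr A ∧ Disjoint A ω ∧ ∀ ω' ∈ Q.Ω, ω' ≠ ω → (A ∩ ω').Nonempty

/-- A multimatroid is non-degenerate if every skew class has at least two elements. -/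
def Nondegenerate : Prop := ∀ ω ∈ Q.Ω, 2 ≤ ω.card

/-- A multimatroid is tight if it is non-degenerate and for every skew class `ω` and
every near-transversal `A` avoiding `ω`, `Σ_{x∈ω} (r(A∪x) − r(A)) = |ω| − 1`. -/
def Tight : Prop :=
  Q.Nondegenerate ∧ ∀ ω ∈ Q.Ω, ∀ A, Q.NearTransversalAvoiding ω A →
    ∑ x ∈ ω, (Q.r (insert x A) - Q.r A) = ω.card - 1

/-- An independent set: a subtransversal whose rank equals its cardinality. -/
def Indep (S : Finset α) : Prop := Q.Subtr S ∧ Q.r S = S.card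

/-- A basis: a maximal independent set. -/
def IsBasis (B : Finset α) : Prop := Q.Indep B ∧ ∀ S, Q.Indep S → B ⊆ S → S = B

/-- A circuit: a dependent subtransversal all of whose proper subsets are independent. -/
def IsCircuit (C : Finset α) : Prop :=
  Q.Subtr C ∧ Q.r C ≠ C.card ∧ ∀ C' ⊂ C, Q.r C' = C'.card

end Multimatroid

namespace Multimatroid

variable {α : Type*} [DecidableEq α] (Q : Multimatroid α)

lemma subtr_mono {A B : Finset α} (hB : Q.Subtr B) (h : A ⊆ B) : Q.Subtr A :=
  ⟨h.trans hB.1, fun ω hω =>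
    le_trans (Finset.card_le_card (Finset.inter_subset_inter h (Finset.Subset.refl ω)))
      (hB.2 ω hω)⟩

lemma class_inter_eq {A ω : Finset α} {x : α} (hA : Q.Subtr A) (hω : ω ∈ Q.Ω)
    (hx : x ∈ ω) (hxA : x ∈ A) : A ∩ ω = {x} := by
  apply Finset.eq_singleton_iff_unique_mem.2
  refine ⟨Finset.mem_inter.2 ⟨hxA, hx⟩, fun y hy => ?_⟩
  exact Finset.card_le_one.mp (hA.2 ω hω) y hy x (Finset.mem_inter.2 ⟨hxA, hx⟩)

lemma class_disjoint_erase {A ω : Finset α} {x : α} (hA : Q.Subtr A) (hω : ω ∈ Q.Ω)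
    (hx : x ∈ ω) (hxA : x ∈ A) : Disjoint ω (A.erase x) := by
  rw [Finset.disjoint_left]
  intro y hyω hyE
  have : y ∈ A ∩ ω := Finset.mem_inter.2 ⟨Finset.mem_of_mem_erase hyE, hyω⟩
  rw [Q.class_inter_eq hA hω hx hxA] at this
  exact (Finset.ne_of_mem_erase hyE) (Finset.mem_singleton.mp this)

lemma class_disjoint_of_notMem {A ω : Finset α} (hA : Q.Subtr A) (hω : ω ∈ Q.Ω)
    (h : ∀ x ∈ ω, x ∉ A) : Disjoint ω A := by
  rw [Finset.disjoint_left]; exact fun y hy hyA => h y hy hyA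

lemma rank_mono_aux (n : ℕ) : ∀ B C : Finset α, Q.Subtr B → C ⊆ B → (B \ C).card ≤ n →
    Q.r C ≤ Q.r B := by
  induction n with
  | zero =>
    intro B C hB hCB h
    have : B \ C = ∅ := Finset.card_eq_zero.mp (Nat.le_zero.mp h)
    have : B = C := Finset.Subset.antisymm (fun x hx => by
      by_contra hxC
      exact absurd (Finset.mem_sdiff.2 ⟨hx, hxC⟩) (by simp [this])) hCB
    rw [this]
  | succ n ih =>
    intro B C hB hCB h
    rcases Finset.eq_empty_or_nonempty (B \ C) with hemp | ⟨x, hx⟩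
    · have : B = C := Finset.Subset.antisymm (fun y hy => by
        by_contra hyC
        exact absurd (Finset.mem_sdiff.2 ⟨hy, hyC⟩) (by simp [hemp])) hCB
      rw [this]
    · obtain ⟨hxB, hxC⟩ := Finset.mem_sdiff.mp hx
      obtain ⟨ω, hω, hxω⟩ := Q.classes_cover x (hB.1 hxB)
      have hdisj : Disjoint ω C := by
        rw [Finset.disjoint_left]
        intro y hyω hyC
        have : y ∈ B ∩ ω := Finset.mem_inter.2 ⟨hCB hyC, hyω⟩
        rw [Q.class_inter_eq hB hω hxω hxB] at this
        exact hxC (Finset.mem_singleton.mp this ▸ hyC)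
      have h1 := (Q.rank_step C x ω (Q.subtr_mono hB hCB) hω hxω hdisj).1
      have h2 : Q.r (insert x C) ≤ Q.r B := by
        apply ih B (insert x C) hB (Finset.insert_subset hxB hCB)
        have : B \ insert x C = (B \ C).erase x := by
          ext y; simp [Finset.mem_sdiff, Finset.mem_erase]; tauto
        rw [this, Finset.card_erase_of_mem hx]
        omega
      exact le_trans h1 h2

lemma rank_mono {B C : Finset α} (hB : Q.Subtr B) (hCB : C ⊆ B) : Q.r C ≤ Q.r B :=
  Q.rank_mono_aux (B \ C).card B C hB hCB le_rfl

lemma rank_le_card_aux (n : ℕ) : ∀ A : Finset α, Q.Subtr A → A.card ≤ n →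
    Q.r A ≤ A.card := by
  induction n with
  | zero =>
    intro A hA h
    have : A = ∅ := Finset.card_eq_zero.mp (Nat.le_zero.mp h)
    simp [this, Q.rank_empty]
  | succ n ih =>
    intro A hA h
    rcases Finset.eq_empty_or_nonempty A with rfl | ⟨x, hx⟩
    · simp [Q.rank_empty]
    · obtain ⟨ω, hω, hxω⟩ := Q.classes_cover x (hA.1 hx)
      have hdisj := Q.class_disjoint_erase hA hω hxω hx
      have hsub : Q.Subtr (A.erase x) := Q.subtr_mono hA (Finset.erase_subset x A)
      have h2 := (Q.rank_step (A.erase x) x ω hsub hω hxω hdisj).2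
      rw [Finset.insert_erase hx] at h2
      have h3 := ih (A.erase x) hsub (by rw [Finset.card_erase_of_mem hx]; omega)
      have h4 : A.card = (A.erase x).card + 1 := by
        rw [Finset.card_erase_of_mem hx]
        have : 1 ≤ A.card := Finset.card_pos.mpr ⟨x, hx⟩
        omega
      omega

lemma rank_le_card {A : Finset α} (hA : Q.Subtr A) : Q.r A ≤ A.card :=
  Q.rank_le_card_aux A.card A hA le_rfl

/-- The swap lemma: if `a` adds nothing to `B`, any other element of its class adds 1. -/
lemma swap_rank {B ω : Finset α} {a b : α} (hB : Q.Subtr B) (hω : ω ∈ Q.Ω)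
    (ha : a ∈ ω) (hb : b ∈ ω) (hab : a ≠ b) (hdisj : Disjoint ω B)
    (h : Q.r (insert a B) = Q.r B) : Q.r (insert b B) = Q.r B + 1 := by
  have h4 := Q.rank_skew B a b ω hB hω ha hb hab hdisj
  have h2 := (Q.rank_step B b ω hB hω hb hdisj).2
  omega

/-- If `A` is dependent and `r {e} = 1` for `e ∈ A`, some `a ≠ e` is removable
without dropping the rank. -/
lemma exists_removable {A : Finset α} {e : α} (hA : Q.Subtr A) (he : e ∈ A)
    (hre : Q.r {e} = 1) (hdep : Q.r A < A.card) :
    ∃ a ∈ A, a ≠ e ∧ Q.r (A.erase a) = Q.r A := by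
  by_contra hcon
  push_neg at hcon
  have hdrop : ∀ a ∈ A, a ≠ e → Q.r (A.erase a) + 1 ≤ Q.r A := by
    intro a ha hae
    have h1 := Q.rank_mono hA (Finset.erase_subset a A)
    have h2 := hcon a ha hae
    omega
  have key : ∀ X : Finset α, X ⊆ A.erase e → Q.r (A \ X) + X.card ≤ Q.r A := by
    intro X
    induction X using Finset.induction_on with
    | empty => intro _; simp
    | @insert a X haX ih =>
      intro hXA
      have hX : X ⊆ A.erase e := (Finset.subset_insert a X).trans hXA
      have haE : a ∈ A.erase e := hXA (Finset.mem_insert_self a X)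
      have haA : a ∈ A := Finset.mem_of_mem_erase haE
      have hae : a ≠ e := Finset.ne_of_mem_erase haE
      have hunion : (A \ X) ∪ (A.erase a) = A := by
        ext y
        simp only [Finset.mem_union, Finset.mem_sdiff, Finset.mem_erase]
        constructor
        · rintro (⟨h1, _⟩ | ⟨_, h1⟩) <;> exact h1
        · intro hy
          by_cases hya : y = a
          · exact Or.inl ⟨hy, fun hyX => haX (hya ▸ hyX)⟩
          · exact Or.inr ⟨hya, hy⟩
      have hinter : (A \ X) ∩ (A.erase a) = A \ (insert a X) := by
        ext y
        simp only [Finset.mem_inter, Finset.mem_sdiff, Finset.mem_erase,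
          Finset.mem_insert]
        tauto
      have hsm := Q.rank_submod (A \ X) (A.erase a) (by rw [hunion]; exact hA)
      rw [hunion, hinter] at hsm
      have h1 := ih hX
      have h2 := hdrop a haA hae
      rw [Finset.card_insert_of_notMem haX]
      omega
  have hfin := key (A.erase e) (Finset.Subset.refl _)
  have hsd : A \ (A.erase e) = {e} := by
    ext y
    simp only [Finset.mem_sdiff, Finset.mem_erase, Finset.mem_singleton]
    constructor
    · rintro ⟨hy, h⟩
      by_contra hne
      exact h ⟨hne, hy⟩
    · rintro rfl
      exact ⟨he, fun h => h.1 rfl⟩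
  rw [hsd, hre, Finset.card_erase_of_mem he] at hfin
  have : 1 ≤ A.card := Finset.card_pos.mpr ⟨e, he⟩
  omega

lemma minorGround_subset (A : Finset α) : Q.minorGround A ⊆ Q.U := by
  intro x hx
  obtain ⟨ω, hω, hxω⟩ := Finset.mem_biUnion.mp hx
  exact Q.classes_subset ω (Finset.mem_filter.mp hω).1 hxω

lemma minorGround_disjoint (A : Finset α) : Disjoint (Q.minorGround A) A := by
  rw [Finset.disjoint_left]
  intro y hy hyA
  obtain ⟨ω, hω, hyω⟩ := Finset.mem_biUnion.mp hy
  exact Finset.disjoint_left.mp (Finset.mem_filter.mp hω).2 hyω hyA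

lemma minorSubtr_disjoint_class {A S ω : Finset α} (hS : Q.MinorSubtr A S)
    (hω : ω ∈ Q.Ω) (hωA : ¬ Disjoint ω A) : Disjoint S ω := by
  rw [Finset.disjoint_left]
  intro y hyS hyω
  obtain ⟨ω', hω', hyω'⟩ := Finset.mem_biUnion.mp (hS.1 hyS)
  obtain ⟨hω'Ω, hω'A⟩ := Finset.mem_filter.mp hω'
  by_cases h : ω = ω'
  · exact hωA (h ▸ hω'A)
  · exact Finset.disjoint_left.mp (Q.classes_disjoint ω hω ω' hω'Ω h) hyω hyω'

lemma minorSubtr_union_subtr {A S : Finset α} (hA : Q.Subtr A) (hS : Q.MinorSubtr A S) :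
    Q.Subtr (S ∪ A) := by
  constructor
  · exact Finset.union_subset ((hS.1).trans (Q.minorGround_subset A)) hA.1
  · intro ω hω
    by_cases hdisj : Disjoint ω A
    · have h1 : (S ∪ A) ∩ ω = S ∩ ω := by
        ext y
        simp only [Finset.mem_inter, Finset.mem_union]
        constructor
        · rintro ⟨hyS | hyA, hyω⟩
          · exact ⟨hyS, hyω⟩
          · exact absurd hyA (Finset.disjoint_left.mp hdisj hyω)
        · rintro ⟨h1, h2⟩; exact ⟨Or.inl h1, h2⟩
      rw [h1]
      exact hS.2 ω (Finset.mem_filter.mpr ⟨hω, hdisj⟩)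
    · have hSω : Disjoint S ω := Q.minorSubtr_disjoint_class hS hω hdisj
      have h1 : (S ∪ A) ∩ ω = A ∩ ω := by
        ext y
        simp only [Finset.mem_inter, Finset.mem_union]
        constructor
        · rintro ⟨hyS | hyA, hyω⟩
          · exact absurd hyω (Finset.disjoint_left.mp hSω hyS)
          · exact ⟨hyA, hyω⟩
        · rintro ⟨h1, h2⟩; exact ⟨Or.inr h1, h2⟩
      rw [h1]
      exact hA.2 ω hω

lemma minorSubtr_disjoint {A S : Finset α} (hS : Q.MinorSubtr A S) : Disjoint S A :=
  Finset.disjoint_of_subset_left hS.1 (Q.minorGround_disjoint A)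

/-- The main inductive step, by induction on `|A| - r(A)`. -/
lemma scum_aux (hnd : Q.Nondegenerate) :
    ∀ (n : ℕ) (A : Finset α) (e : α), Q.Subtr A → e ∈ A → Q.r {e} = 1 →
    A.card - Q.r A ≤ n →
    ∃ I, Q.Indep I ∧ e ∈ I ∧
      Q.minorClasses I = Q.minorClasses A ∧
      ∀ S, Q.MinorSubtr A S → Q.r (S ∪ I) + Q.r A = Q.r (S ∪ A) + Q.r I := by
  intro n
  induction n with
  | zero =>
    intro A e hA he hre hm
    have h1 := Q.rank_le_card hA
    have hind : Q.r A = A.card := by omega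
    exact ⟨A, ⟨hA, hind⟩, he, rfl, fun S _ => by ring⟩
  | succ n ih =>
    intro A e hA he hre hm
    by_cases hind : Q.r A = A.card
    · exact ⟨A, ⟨hA, hind⟩, he, rfl, fun S _ => by ring⟩
    · have hdep : Q.r A < A.card := lt_of_le_of_ne (Q.rank_le_card hA) hind
      obtain ⟨a, haA, hae, hra⟩ := Q.exists_removable hA he hre hdep
      obtain ⟨ω, hω, haω⟩ := Q.classes_cover a (hA.1 haA)
      obtain ⟨b, hbω, hba⟩ :=
        Finset.exists_mem_ne (lt_of_lt_of_le one_lt_two (hnd ω hω)) a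
      have hdisjE : Disjoint ω (A.erase a) := Q.class_disjoint_erase hA hω haω haA
      have hbE : b ∉ A.erase a := fun h => Finset.disjoint_left.mp hdisjE hbω h
      set A' := insert b (A.erase a) with hA'def
      have hsubE : Q.Subtr (A.erase a) := Q.subtr_mono hA (Finset.erase_subset a A)
      -- A' is a subtransversal
      have hA' : Q.Subtr A' := by
        constructor
        · exact Finset.insert_subset (Q.classes_subset ω hω hbω) (hsubE.1)
        · intro ω' hω'
          by_cases hbω' : b ∈ ω'
          · have hωeq : ω' = ω := by
              by_contra hne
              exact Finset.disjoint_left.mp (Q.classes_disjoint ω' hω' ω hω hne) hbω' hbω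
            have : A' ∩ ω' ⊆ {b} := by
              intro y hy
              obtain ⟨hy1, hy2⟩ := Finset.mem_inter.mp hy
              rcases Finset.mem_insert.mp hy1 with rfl | hy1
              · exact Finset.mem_singleton_self y
              · exact absurd hy2 (fun h =>
                  Finset.disjoint_left.mp hdisjE (hωeq ▸ h) hy1)
            exact le_trans (Finset.card_le_card this) (by simp)
          · have : A' ∩ ω' = (A.erase a) ∩ ω' := by
              ext y
              simp only [hA'def, Finset.mem_inter, Finset.mem_insert]
              constructor
              · rintro ⟨rfl | h1, h2⟩
                · exact absurd h2 hbω'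
                · exact ⟨h1, h2⟩
              · rintro ⟨h1, h2⟩; exact ⟨Or.inr h1, h2⟩
            rw [this]
            exact le_trans (Finset.card_le_card
              (Finset.inter_subset_inter (Finset.erase_subset a A) (Finset.Subset.refl _)))
              (hA.2 ω' hω')
      -- rank of A'
      have hrA' : Q.r A' = Q.r A + 1 := by
        have h := Q.swap_rank hsubE hω haω hbω (Ne.symm hba) hdisjE
          (by rw [Finset.insert_erase haA, hra])
        rw [h, hra]
      -- cardinality of A'
      have hcA' : A'.card = A.card := by
        rw [hA'def, Finset.card_insert_of_notMem hbE, Finset.card_erase_of_mem haA]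
        have : 1 ≤ A.card := Finset.card_pos.mpr ⟨a, haA⟩
        omega
      -- e ∈ A'
      have heA' : e ∈ A' := Finset.mem_insert_of_mem (Finset.mem_erase.mpr ⟨Ne.symm hae, he⟩)
      -- same minor classes
      have hclasses : Q.minorClasses A' = Q.minorClasses A := by
        apply Finset.filter_congr
        intro ω' hω'
        by_cases hbω' : b ∈ ω'
        · have hωeq : ω' = ω := by
            by_contra hne
            exact Finset.disjoint_left.mp (Q.classes_disjoint ω' hω' ω hω hne) hbω' hbω
          constructor
          · intro h
            exact absurd (Finset.mem_insert_self b _) (Finset.disjoint_left.mp h hbω')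
          · intro h
            exact absurd haA (Finset.disjoint_left.mp h (hωeq ▸ haω))
        · have haω' : a ∉ ω' := by
            intro h
            have hωeq : ω' = ω := by
              by_contra hne
              exact Finset.disjoint_left.mp (Q.classes_disjoint ω' hω' ω hω hne) h haω
            exact hbω' (hωeq ▸ hbω)
          constructor
          · intro h
            rw [Finset.disjoint_left]
            intro y hyω' hyA
            by_cases hya : y = a
            · exact haω' (hya ▸ hyω')
            · exact Finset.disjoint_left.mp h hyω'
                (Finset.mem_insert_of_mem (Finset.mem_erase.mpr ⟨hya, hyA⟩))
          · intro h
            rw [Finset.disjoint_left]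
            intro y hyω' hyA'
            rcases Finset.mem_insert.mp hyA' with rfl | hyE
            · exact hbω' hyω'
            · exact Finset.disjoint_left.mp h hyω' (Finset.mem_of_mem_erase hyE)
      -- the step on ranks for minor subtransversals
      have hstep : ∀ S, Q.MinorSubtr A S → Q.r (S ∪ A') = Q.r (S ∪ A) + 1 := by
        intro S hS
        have hSA : Q.Subtr (S ∪ A) := Q.minorSubtr_union_subtr hA hS
        have hSdisjA : Disjoint S A := Q.minorSubtr_disjoint hS
        have hSω : Disjoint S ω := Q.minorSubtr_disjoint_class hS hω
          (fun h => Finset.disjoint_left.mp h haω haA)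
        -- r (S ∪ A.erase a) = r (S ∪ A)
        have hE : Q.r (S ∪ A.erase a) = Q.r (S ∪ A) := by
          have hle : Q.r (S ∪ A.erase a) ≤ Q.r (S ∪ A) :=
            Q.rank_mono hSA (Finset.union_subset_union (Finset.Subset.refl S)
              (Finset.erase_subset a A))
          have hun : (S ∪ A.erase a) ∪ A = S ∪ A := by
            ext y
            simp only [Finset.mem_union, Finset.mem_erase]
            tauto
          have hin : (S ∪ A.erase a) ∩ A = A.erase a := by
            ext y
            simp only [Finset.mem_inter, Finset.mem_union, Finset.mem_erase]
            constructor
            · rintro ⟨hyS | ⟨h1, h2⟩, hyA⟩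
              · exact absurd hyA (Finset.disjoint_left.mp hSdisjA hyS)
              · exact ⟨h1, hyA⟩
            · rintro ⟨h1, h2⟩
              exact ⟨Or.inr ⟨h1, h2⟩, h2⟩
          have hsm := Q.rank_submod (S ∪ A.erase a) A (by rw [hun]; exact hSA)
          rw [hun, hin] at hsm
          omega
        have hdisjSE : Disjoint ω (S ∪ A.erase a) :=
          Finset.disjoint_union_right.mpr ⟨hSω.symm, hdisjE⟩
        have hsubSE : Q.Subtr (S ∪ A.erase a) := Q.subtr_mono hSA
          (Finset.union_subset_union (Finset.Subset.refl S) (Finset.erase_subset a A))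
        have hins_a : insert a (S ∪ A.erase a) = S ∪ A := by
          rw [← Finset.union_insert, Finset.insert_erase haA]
        have hins_b : insert b (S ∪ A.erase a) = S ∪ A' := by
          rw [← Finset.union_insert]
        have h := Q.swap_rank hsubSE hω haω hbω (Ne.symm hba) hdisjSE
          (by rw [hins_a, hE])
        rw [hins_b, hE] at h
        exact h
      -- apply the induction hypothesis to A'
      have hgr : Q.minorGround A' = Q.minorGround A := by
        unfold minorGround
        rw [hclasses]
      have hms : ∀ S, Q.MinorSubtr A S → Q.MinorSubtr A' S := by
        intro S hS
        unfold MinorSubtr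
        rw [hgr, hclasses]
        exact hS
      obtain ⟨I, hI, heI, hIc, hIr⟩ := ih A' e hA' heA' hre (by rw [hcA', hrA']; omega)
      refine ⟨I, hI, heI, hIc.trans hclasses, fun S hS => ?_⟩
      have h1 := hIr S (hms S hS)
      have h2 := hstep S hS
      omega

end Multimatroid

/-- For a non-degenerate multimatroid `Q`, a subtransversal `A` and an element `e ∈ A`
with `r({e}) = 1`, there is an independent set `I` of `Q` with `e ∈ I` and `Q|A = Q|I`,
i.e. the two minors have the same skew classes and the same rank function (the rank
equality `r(S ∪ I) − r(I) = r(S ∪ A) − r(A)` being expressed additively). -/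
theorem scum_multimatroid {α : Type*} [DecidableEq α]
    (Q : Multimatroid α) (hnd : Q.Nondegenerate)
    (A : Finset α) (hA : Q.Subtr A) (e : α) (he : e ∈ A) (hre : Q.r {e} = 1) :
    ∃ I, Q.Indep I ∧ e ∈ I ∧
      Q.minorClasses I = Q.minorClasses A ∧
      ∀ S, Q.MinorSubtr A S → Q.r (S ∪ I) + Q.r A = Q.r (S ∪ A) + Q.r I :=
  Q.scum_aux hnd (A.card - Q.r A) A e hA he hre le_rfl
end
end

section
/- Let Q be a connected tight multimatroid containing an element e such that Q|e is disconnected. If X is a proper separator of Q|e, then Q has a circuit C such that e ∈ C and C ⊆ X ∪ {e}. -/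
noncomputable section
open scoped Classical

variable {α : Type*} [DecidableEq α]

/-!
If some subtransversal `A ⊆ X` spans `e`, a minimal such `A` together with `e` is the required
circuit. Otherwise `X` turns out to be a separator of `Q` itself, contradicting connectivity
(`X` is nonempty and misses `e`). Let `ωe` be the skew class of `e`. As `e` is spanned by no
subtransversal of `X`, the separator identity of `Q|e` reads
`r(S ∪ e) = r(S ∩ X) + r((S \ X) ∪ e)`, and submodularity then gives `r S = r(S ∩ X) + r(S \ X)`
for subtransversals `S` avoiding `ωe`. What remains, `S ∪ w` with `w ∈ ωe`, comes down to: if `w`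
is not spanned by `S`, it is not spanned by `S ∪ a` for `a ∈ X`. This is proved by downward
induction on `|S|`. If `S` misses a class `ν'` other than those of `a` and `w`, axiom (4) forbids
two elements of `ν'` to both make `w` spanned, so `S` can be enlarged by one of them. Otherwise
`S ∪ w` and `S ∪ e` are near-transversals avoiding the class `ν` of `a`, and tightness gives
`z ∈ ν` spanned by `S ∪ e`, hence by `S ∩ X`, hence by `S ∪ w`. A counterexample would make `a`
spanned by `S ∪ w` but not by `S`; by uniqueness `a = z`, which is spanned by `S`.
-/

namespace Multimatroid

variable {Q : Multimatroid α} {A B S T : Finset α} {e w x y : α} {ω ν : Finset α}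

lemma eq_of_mem_class {ω₁ ω₂ : Finset α} (h₁ : ω₁ ∈ Q.Ω) (h₂ : ω₂ ∈ Q.Ω) (hx₁ : x ∈ ω₁)
    (hx₂ : x ∈ ω₂) : ω₁ = ω₂ := by
  by_contra hne
  exact Finset.disjoint_left.mp (Q.classes_disjoint ω₁ h₁ ω₂ h₂ hne) hx₁ hx₂

lemma Subtr.subset (hB : Q.Subtr B) (hAB : A ⊆ B) : Q.Subtr A :=
  ⟨hAB.trans hB.1, fun ω hω =>
    (Finset.card_le_card (Finset.inter_subset_inter_right hAB)).trans (hB.2 ω hω)⟩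

lemma Subtr.insert_of_disjoint (hA : Q.Subtr A) (hω : ω ∈ Q.Ω) (hx : x ∈ ω) (hd : Disjoint ω A) :
    Q.Subtr (insert x A) := by
  refine ⟨Finset.insert_subset (Q.classes_subset ω hω hx) hA.1, fun ω' hω' => ?_⟩
  by_cases hxω' : x ∈ ω'
  · obtain rfl := eq_of_mem_class hω' hω hxω' hx
    rw [Finset.insert_inter_of_mem hxω', Finset.disjoint_iff_inter_eq_empty.mp hd.symm]
    simp
  · rw [Finset.insert_inter_of_notMem hxω']
    exact hA.2 ω' hω'

lemma Subtr.eq_of_mem_class (hS : Q.Subtr S) (hω : ω ∈ Q.Ω) (hxS : x ∈ S) (hyS : y ∈ S)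
    (hx : x ∈ ω) (hy : y ∈ ω) : x = y :=
  Finset.card_le_one.mp (hS.2 ω hω) x (Finset.mem_inter.mpr ⟨hxS, hx⟩) y
    (Finset.mem_inter.mpr ⟨hyS, hy⟩)

lemma Subtr.disjoint_of_insert (h : Q.Subtr (insert x A)) (hxA : x ∉ A) (hω : ω ∈ Q.Ω)
    (hx : x ∈ ω) : Disjoint ω A :=
  Finset.disjoint_left.mpr fun _ haω haA => hxA <|
    h.eq_of_mem_class hω (Finset.mem_insert_self x A) (Finset.mem_insert_of_mem haA) hx haω ▸ haA

lemma rank_insert_bounds (h : Q.Subtr (insert x A)) (hxA : x ∉ A) :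
    Q.r A ≤ Q.r (insert x A) ∧ Q.r (insert x A) ≤ Q.r A + 1 := by
  obtain ⟨ω, hω, hx⟩ := Q.classes_cover x (h.1 (Finset.mem_insert_self x A))
  exact Q.rank_step A x ω (h.subset (Finset.subset_insert x A)) hω hx
    (h.disjoint_of_insert hxA hω hx)

lemma rank_insert_eq_or (h : Q.Subtr (insert x A)) (hxA : x ∉ A) :
    Q.r (insert x A) = Q.r A ∨ Q.r (insert x A) = Q.r A + 1 := by
  have := rank_insert_bounds h hxA
  omega

lemma rank_mono_s4 (hB : Q.Subtr B) (hAB : A ⊆ B) : Q.r A ≤ Q.r B := by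
  suffices ∀ D, Q.Subtr (A ∪ D) → Q.r A ≤ Q.r (A ∪ D) by
    simpa [Finset.union_eq_right.mpr hAB] using this B (by rwa [Finset.union_eq_right.mpr hAB])
  intro D
  induction D using Finset.induction_on with
  | empty => simp
  | insert d D _ ih =>
    intro hD
    rw [Finset.union_insert] at hD ⊢
    by_cases hd : d ∈ A ∪ D
    · rw [Finset.insert_eq_of_mem hd] at hD ⊢
      exact ih hD
    · exact (ih (hD.subset (Finset.subset_insert d _))).trans (rank_insert_bounds hD hd).1

lemma rank_le_card_s4 (hS : Q.Subtr S) : Q.r S ≤ S.card := by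
  induction S using Finset.induction_on with
  | empty => simp [Q.rank_empty]
  | insert x S hxS ih =>
    rw [Finset.card_insert_of_notMem hxS]
    have := (rank_insert_bounds hS hxS).2
    have := ih (hS.subset (Finset.subset_insert x S))
    omega

lemma rank_insert_add_le (h : Q.Subtr (insert x B)) (hAB : A ⊆ B) (hxB : x ∉ B) :
    Q.r (insert x B) + Q.r A ≤ Q.r (insert x A) + Q.r B := by
  have hu : insert x A ∪ B = insert x B := by
    rw [Finset.insert_union, Finset.union_eq_right.mpr hAB]
  have hi : insert x A ∩ B = A := by
    rw [Finset.insert_inter_of_notMem hxB, Finset.inter_eq_left.mpr hAB]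
  simpa only [hu, hi] using Q.rank_submod (insert x A) B (hu ▸ h)

lemma rank_insert_eq_of_subset (h : Q.Subtr (insert x B)) (hAB : A ⊆ B) (hxB : x ∉ B)
    (hA : Q.r (insert x A) = Q.r A) : Q.r (insert x B) = Q.r B := by
  have := rank_insert_add_le h hAB hxB
  have := (rank_insert_bounds h hxB).1
  omega

lemma eq_of_rank_insert_eq (hA : Q.Subtr A) (hν : ν ∈ Q.Ω) (hx : x ∈ ν) (hy : y ∈ ν)
    (hd : Disjoint ν A) (hxA : Q.r (insert x A) = Q.r A) (hyA : Q.r (insert y A) = Q.r A) :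
    x = y := by
  by_contra hne
  have := Q.rank_skew A x y ν hA hν hx hy hne hd
  omega

lemma rank_insert_exchange (h : Q.Subtr (insert x (insert y S))) (hyS : y ∉ S)
    (hxy : x ≠ y) (hx : Q.r (insert x S) = Q.r S + 1)
    (hxy0 : Q.r (insert x (insert y S)) = Q.r (insert y S)) :
    Q.r (insert y (insert x S)) = Q.r (insert x S) ∧ Q.r (insert y S) = Q.r S + 1 := by
  have hcomm : insert y (insert x S) = insert x (insert y S) := Finset.insert_comm y x S
  have h₁ := (rank_insert_bounds (h.subset (Finset.subset_insert x _)) hyS).2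
  have h₂ := (rank_insert_bounds (hcomm ▸ h) (by simp [hxy.symm, hyS])).1
  rw [hcomm] at h₂ ⊢
  omega

lemma exists_rank_insert_insert_eq_add_one (hS : Q.Subtr (insert x S)) (hxS : x ∉ S)
    (hν : ν ∈ Q.Ω) (hν2 : 2 ≤ ν.card) (hd : Disjoint ν (insert x S))
    (hx : Q.r (insert x S) = Q.r S + 1) :
    ∃ y ∈ ν, Q.r (insert x (insert y S)) = Q.r (insert y S) + 1 := by
  obtain ⟨p, hp, q, hq, hpq⟩ := Finset.one_lt_card.mp hν2
  by_contra! hfail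
  have hzero : ∀ y ∈ ν, Q.r (insert y (insert x S)) = Q.r (insert x S) := by
    intro y hy
    have hyxS := Finset.disjoint_left.mp hd hy
    have hsub : Q.Subtr (insert x (insert y S)) := by
      rw [Finset.insert_comm]
      exact hS.insert_of_disjoint hν hy hd
    have hyS : y ∉ S := fun h => hyxS (Finset.mem_insert_of_mem h)
    have hxy : x ≠ y := fun h => hyxS (h ▸ Finset.mem_insert_self x S)
    refine (rank_insert_exchange hsub hyS hxy hx ?_).1
    exact (rank_insert_eq_or hsub (by simp [hxy, hxS])).resolve_right (hfail y hy)
  exact hpq (eq_of_rank_insert_eq hS hν hp hq hd (hzero p hp) (hzero q hq))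

lemma Tight.exists_rank_insert_eq (hT : Q.Tight) (hν : ν ∈ Q.Ω)
    (hN : Q.NearTransversalAvoiding ν S) : ∃ y ∈ ν, Q.r (insert y S) = Q.r S := by
  by_contra! hfree
  have hone : ∀ y ∈ ν, Q.r (insert y S) - Q.r S = 1 := by
    intro y hy
    have := Q.rank_step S y ν hN.1 hν hy hN.2.1.symm
    have := hfree y hy
    omega
  have hsum := hT.2 ν hν S hN
  rw [Finset.sum_congr rfl hone, Finset.sum_const, smul_eq_mul, mul_one] at hsum
  have := hT.1 ν hν
  omega

lemma rank_eq_card_of_subset (hB : Q.Subtr B) (hAB : A ⊆ B) (hind : Q.r B = B.card) :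
    Q.r A = A.card := by
  have hsub := Q.rank_submod A (B \ A) (by rwa [Finset.union_sdiff_of_subset hAB])
  rw [Finset.union_sdiff_of_subset hAB, Finset.inter_sdiff_self, Q.rank_empty] at hsub
  have := rank_le_card_s4 (hB.subset hAB)
  have := rank_le_card_s4 (hB.subset (Finset.sdiff_subset (s := B) (t := A)))
  have := Finset.card_sdiff_add_card_eq_card hAB
  omega

lemma exists_rank_erase_eq (hS : Q.Subtr S) (hlt : Q.r S < S.card) :
    ∃ t ∈ S, Q.r (S.erase t) = Q.r S := by
  induction S using Finset.induction_on with
  | empty => simp at hlt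
  | insert x S hxS ih =>
    have hS' := hS.subset (Finset.subset_insert x S)
    have hbounds := rank_insert_bounds hS hxS
    rw [Finset.card_insert_of_notMem hxS] at hlt
    by_cases hind : Q.r S = S.card
    · exact ⟨x, Finset.mem_insert_self x S, by rw [Finset.erase_insert hxS]; omega⟩
    · obtain ⟨t, ht, hdrop⟩ := ih hS' (lt_of_le_of_ne (rank_le_card_s4 hS') hind)
      have htx : t ≠ x := fun h => hxS (h ▸ ht)
      refine ⟨t, Finset.mem_insert_of_mem ht, ?_⟩
      rw [Finset.erase_insert_of_ne htx.symm]
      have hsub : insert t (insert x (S.erase t)) = insert x S := by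
        rw [Finset.insert_comm, Finset.insert_erase ht]
      have := rank_insert_eq_of_subset (hsub ▸ hS) (Finset.subset_insert x (S.erase t))
        (by simp [htx]) (by rw [Finset.insert_erase ht]; exact hdrop.symm)
      rwa [hsub, eq_comm] at this

lemma isCircuit_insert (hT : Q.Subtr (insert e T)) (heT : e ∉ T) (hind : Q.r T = T.card)
    (hspan : Q.r (insert e T) = Q.r T)
    (hmin : ∀ T' ⊂ T, Q.r (insert e T') = Q.r T' + 1) : Q.IsCircuit (insert e T) := by
  refine ⟨hT, by rw [hspan, hind, Finset.card_insert_of_notMem heT]; omega, fun C hC => ?_⟩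
  by_cases heC : e ∈ C
  · have hCT : C.erase e ⊂ T := by
      refine ⟨fun c hc => ?_, fun hTC => hC.2 ?_⟩
      · obtain ⟨hce, hcC⟩ := Finset.mem_erase.mp hc
        exact (Finset.mem_insert.mp (hC.1 hcC)).resolve_left hce
      · exact Finset.insert_subset heC (hTC.trans (Finset.erase_subset e C))
    have hsub := rank_eq_card_of_subset (hT.subset (Finset.subset_insert e T)) hCT.1 hind
    rw [← Finset.insert_erase heC, hmin _ hCT, hsub,
      Finset.card_insert_of_notMem (Finset.notMem_erase e C)]
  · exact rank_eq_card_of_subset (hT.subset (Finset.subset_insert e T))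
      (fun c hc => (Finset.mem_insert.mp (hC.1 hc)).resolve_left (fun h => heC (h ▸ hc))) hind

lemma exists_isCircuit_of_rank_insert_eq (hS : Q.Subtr (insert e S)) (heS : e ∉ S)
    (hspan : Q.r (insert e S) = Q.r S) : ∃ C, Q.IsCircuit C ∧ e ∈ C ∧ C ⊆ insert e S := by
  obtain ⟨T, hTF, hTmin⟩ := Finset.exists_min_image
    (S.powerset.filter fun T => Q.r (insert e T) = Q.r T) Finset.card
    ⟨S, Finset.mem_filter.mpr ⟨Finset.mem_powerset_self S, hspan⟩⟩
  obtain ⟨hTS, hTspan⟩ := Finset.mem_filter.mp hTF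
  replace hTS := Finset.mem_powerset.mp hTS
  have heT : e ∉ T := fun h => heS (hTS h)
  have hT : Q.Subtr (insert e T) := hS.subset (Finset.insert_subset_insert e hTS)
  have hmin : ∀ T' ⊂ T, Q.r (insert e T') = Q.r T' + 1 := by
    intro T' hT'
    refine (rank_insert_eq_or (hT.subset (Finset.insert_subset_insert e hT'.1))
      fun h => heT (hT'.1 h)).resolve_left fun hspan' => ?_
    have := hTmin T' (Finset.mem_filter.mpr ⟨Finset.mem_powerset.mpr (hT'.1.trans hTS), hspan'⟩)
    exact absurd this (not_le.mpr (Finset.card_lt_card hT'))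
  have hind : Q.r T = T.card := by
    by_contra hne
    obtain ⟨t, ht, hdrop⟩ := exists_rank_erase_eq (hT.subset (Finset.subset_insert e T))
      (lt_of_le_of_ne (rank_le_card_s4 (hT.subset (Finset.subset_insert e T))) hne)
    have := hmin _ (Finset.erase_ssubset ht)
    have := rank_mono_s4 hT (Finset.insert_subset_insert e (Finset.erase_subset t T))
    omega
  exact ⟨insert e T, isCircuit_insert hT heT hind hTspan hmin, Finset.mem_insert_self e T,
    Finset.insert_subset_insert e hTS⟩

lemma mem_minorGround_singleton (hωe : ω ∈ Q.Ω) (he : e ∈ ω) :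
    x ∈ Q.minorGround {e} ↔ x ∈ Q.U ∧ x ∉ ω := by
  simp only [minorGround, minorClasses, Finset.mem_biUnion, Finset.mem_filter, id,
    Finset.disjoint_singleton_right]
  constructor
  · rintro ⟨ν, ⟨hν, heν⟩, hx⟩
    exact ⟨Q.classes_subset ν hν hx, fun hxω => heν (eq_of_mem_class hωe hν hxω hx ▸ he)⟩
  · rintro ⟨hxU, hxω⟩
    obtain ⟨ν, hν, hx⟩ := Q.classes_cover x hxU
    exact ⟨ν, ⟨hν, fun heν => hxω (eq_of_mem_class hν hωe heν he ▸ hx)⟩, hx⟩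

lemma mem_minorClasses_singleton (hωe : ω ∈ Q.Ω) (he : e ∈ ω) (hν : ν ∈ Q.Ω) (hne : ν ≠ ω) :
    ν ∈ Q.minorClasses {e} :=
  Finset.mem_filter.mpr ⟨hν, Finset.disjoint_singleton_right.mpr fun heν =>
    hne (eq_of_mem_class hν hωe heν he)⟩

lemma notMem_of_subset_minorGround (hω : ω ∈ Q.Ω) (he : e ∈ ω) (hw : w ∈ ω)
    (hSM : S ⊆ Q.minorGround {e}) : w ∉ S :=
  fun hwS => ((mem_minorGround_singleton hω he).mp (hSM hwS)).2 hw

lemma Subtr.insert_of_subset_minorGround (hS : Q.Subtr S) (hω : ω ∈ Q.Ω) (he : e ∈ ω)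
    (hw : w ∈ ω) (hSM : S ⊆ Q.minorGround {e}) : Q.Subtr (insert w S) :=
  hS.insert_of_disjoint hω hw
    (Finset.disjoint_left.mpr fun _ hx => notMem_of_subset_minorGround hω he hx hSM)

variable (Q) in
structure IsNonspanningMinorSeparator (e : α) (ωe X : Finset α) : Prop where
  class_mem : ωe ∈ Q.Ω
  mem_class : e ∈ ωe
  isMinorSeparator : Q.IsMinorSeparator {e} X
  rank_insert : ∀ A ⊆ X, Q.Subtr A → Q.r (insert e A) = Q.r A + 1

namespace IsNonspanningMinorSeparator

variable {X ωe : Finset α} {a f z : α}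

lemma notMem_of_subset (h : Q.IsNonspanningMinorSeparator e ωe X) (hw : w ∈ ωe)
    (hSM : S ⊆ Q.minorGround {e}) : w ∉ S :=
  notMem_of_subset_minorGround h.class_mem h.mem_class hw hSM

lemma mem_minorGround (h : Q.IsNonspanningMinorSeparator e ωe X) (hω : ω ∈ Q.Ω)
    (hωe : ω ≠ ωe) (hx : x ∈ ω) : x ∈ Q.minorGround {e} :=
  (mem_minorGround_singleton h.class_mem h.mem_class).mpr
    ⟨Q.classes_subset ω hω hx, fun hxωe => hωe (eq_of_mem_class hω h.class_mem hx hxωe)⟩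

lemma subset_minorGround (h : Q.IsNonspanningMinorSeparator e ωe X) :
    X ⊆ Q.minorGround {e} :=
  h.isMinorSeparator.1

lemma ne_of_mem (h : Q.IsNonspanningMinorSeparator e ωe X) (ha : a ∈ ν) (haX : a ∈ X) :
    ν ≠ ωe := by
  rintro rfl
  exact h.notMem_of_subset ha h.subset_minorGround haX

lemma subset_of_mem (h : Q.IsNonspanningMinorSeparator e ωe X) (hν : ν ∈ Q.Ω) (ha : a ∈ ν)
    (haX : a ∈ X) : ν ⊆ X :=
  (h.isMinorSeparator.2.1 ν (mem_minorClasses_singleton h.class_mem h.mem_class hν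
    (h.ne_of_mem ha haX))).resolve_right (Finset.not_disjoint_iff.mpr ⟨a, ha, haX⟩)

lemma subtr_insert (h : Q.IsNonspanningMinorSeparator e ωe X) (hw : w ∈ ωe) (hS : Q.Subtr S)
    (hSM : S ⊆ Q.minorGround {e}) : Q.Subtr (insert w S) :=
  hS.insert_of_subset_minorGround h.class_mem h.mem_class hw hSM

lemma rank_singleton (h : Q.IsNonspanningMinorSeparator e ωe X) : Q.r {e} = 1 := by
  simpa [Q.rank_empty] using h.rank_insert ∅ (Finset.empty_subset X)
    ⟨Finset.empty_subset _, by simp⟩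

lemma rank_insert_self_split (h : Q.IsNonspanningMinorSeparator e ωe X) (hS : Q.Subtr S)
    (hSM : S ⊆ Q.minorGround {e}) :
    Q.r (insert e S) = Q.r (S ∩ X) + Q.r (insert e (S \ X)) := by
  have hsep := h.isMinorSeparator.2.2 S ⟨hSM, fun ω hω => hS.2 ω (Finset.mem_filter.mp hω).1⟩
  simp only [Finset.union_singleton] at hsep
  rw [h.rank_singleton, h.rank_insert (S ∩ X) Finset.inter_subset_right
    (hS.subset Finset.inter_subset_left)] at hsep
  omega

lemma rank_split (h : Q.IsNonspanningMinorSeparator e ωe X) (hS : Q.Subtr S)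
    (hSM : S ⊆ Q.minorGround {e}) : Q.r S = Q.r (S ∩ X) + Q.r (S \ X) := by
  have hle := Q.rank_submod (S \ X) (S ∩ X) (by rwa [Finset.sdiff_union_inter])
  rw [Finset.sdiff_union_inter, Finset.disjoint_iff_inter_eq_empty.mp
    (Finset.disjoint_sdiff_inter S X), Q.rank_empty] at hle
  have hge := rank_insert_add_le (h.subtr_insert h.mem_class hS hSM) (Finset.sdiff_subset (t := X))
    (h.notMem_of_subset h.mem_class hSM)
  have := h.rank_insert_self_split hS hSM
  omega

lemma rank_insert_inter_eq (h : Q.IsNonspanningMinorSeparator e ωe X) (hzX : z ∈ X)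
    (hz : Q.Subtr (insert z S)) (hSM : S ⊆ Q.minorGround {e})
    (hspan : Q.r (insert z (insert e S)) = Q.r (insert e S)) :
    Q.r (insert z (S ∩ X)) = Q.r (S ∩ X) := by
  have h₁ := h.rank_insert_self_split hz (Finset.insert_subset (h.subset_minorGround hzX) hSM)
  have h₂ := h.rank_insert_self_split (hz.subset (Finset.subset_insert z S)) hSM
  rw [Finset.insert_inter_of_mem hzX, Finset.insert_sdiff_of_mem S hzX] at h₁
  rw [Finset.insert_comm, h₁, h₂] at hspan
  omega

lemma nearTransversalAvoiding_insert (h : Q.IsNonspanningMinorSeparator e ωe X) (hw : w ∈ ωe)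
    (hS : Q.Subtr S) (hSM : S ⊆ Q.minorGround {e}) (hν : ν ∈ Q.Ω) (hνωe : ν ≠ ωe)
    (hνS : Disjoint ν S) (hcover : ∀ ω ∈ Q.Ω, ω ≠ ν → ω ≠ ωe → (S ∩ ω).Nonempty) :
    Q.NearTransversalAvoiding ν (insert w S) := by
  refine ⟨h.subtr_insert hw hS hSM, Finset.disjoint_insert_left.mpr
    ⟨fun hwν => hνωe (eq_of_mem_class hν h.class_mem hwν hw), hνS.symm⟩, fun ω hω hων => ?_⟩
  by_cases hωe : ω = ωe
  · exact ⟨w, Finset.mem_inter.mpr ⟨Finset.mem_insert_self w S, hωe ▸ hw⟩⟩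
  · exact (hcover ω hω hων hωe).mono (Finset.inter_subset_inter_right (Finset.subset_insert w S))

lemma rank_insert_insert_of_forall_nonempty (h : Q.IsNonspanningMinorSeparator e ωe X)
    (hT : Q.Tight) (hf : f ∈ ωe) (hSM : S ⊆ Q.minorGround {e}) (haS : Q.Subtr (insert a S))
    (ha : a ∉ S) (haX : a ∈ X) (hν : ν ∈ Q.Ω) (haν : a ∈ ν)
    (hcover : ∀ ω ∈ Q.Ω, ω ≠ ν → ω ≠ ωe → (S ∩ ω).Nonempty)
    (hfree : Q.r (insert f S) = Q.r S + 1) :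
    Q.r (insert f (insert a S)) = Q.r (insert a S) + 1 := by
  have hS := haS.subset (Finset.subset_insert a S)
  have hνX := h.subset_of_mem hν haν haX
  have hνS := haS.disjoint_of_insert ha hν haν
  have hνωe := h.ne_of_mem haν haX
  have hnear (w) (hw : w ∈ ωe) := h.nearTransversalAvoiding_insert hw hS hSM hν hνωe hνS hcover
  obtain ⟨z, hzν, hz⟩ := hT.exists_rank_insert_eq hν (hnear e h.mem_class)
  have hzS : Q.r (insert z (S ∩ X)) = Q.r (S ∩ X) :=
    h.rank_insert_inter_eq (hνX hzν) (hS.insert_of_disjoint hν hzν hνS) hSM hz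
  have hzf : Q.r (insert z (insert f S)) = Q.r (insert f S) :=
    rank_insert_eq_of_subset ((hnear f hf).1.insert_of_disjoint hν hzν (hnear f hf).2.1.symm)
      (Finset.inter_subset_left.trans (Finset.subset_insert f S))
      (Finset.disjoint_left.mp (hnear f hf).2.1.symm hzν) hzS
  have haM := Finset.insert_subset (h.subset_minorGround haX) hSM
  have hfaS := h.subtr_insert hf haS haM
  by_contra hbad
  have hf0 := (rank_insert_eq_or hfaS (h.notMem_of_subset hf haM)).resolve_right hbad
  obtain ⟨hspan, hafree⟩ := rank_insert_exchange hfaS ha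
    (fun haf => h.notMem_of_subset hf haM (haf ▸ Finset.mem_insert_self a S)) hfree hf0
  obtain rfl : z = a :=
    eq_of_rank_insert_eq (hnear f hf).1 hν hzν haν (hnear f hf).2.1.symm hzf hspan
  have := rank_insert_eq_of_subset haS Finset.inter_subset_left ha hzS
  omega

lemma rank_insert_insert_eq_add_one (h : Q.IsNonspanningMinorSeparator e ωe X) (hT : Q.Tight)
    (hf : f ∈ ωe) {S : Finset α} (hSM : S ⊆ Q.minorGround {e}) (haS : Q.Subtr (insert a S))
    (ha : a ∉ S) (haX : a ∈ X) (hfree : Q.r (insert f S) = Q.r S + 1) :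
    Q.r (insert f (insert a S)) = Q.r (insert a S) + 1 := by
  obtain ⟨ν, hν, haν⟩ := Q.classes_cover a (haS.1 (Finset.mem_insert_self a S))
  by_cases hcover : ∀ ω ∈ Q.Ω, ω ≠ ν → ω ≠ ωe → (S ∩ ω).Nonempty
  · exact h.rank_insert_insert_of_forall_nonempty hT hf hSM haS ha haX hν haν hcover hfree
  push Not at hcover
  obtain ⟨ν', hν', hν'ν, hν'ωe, hν'S⟩ := hcover
  have hd : Disjoint ν' S := by
    rwa [Finset.disjoint_iff_inter_eq_empty, Finset.inter_comm]
  have hS := haS.subset (Finset.subset_insert a S)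
  have hfS := h.notMem_of_subset hf hSM
  obtain ⟨y, hyν', hyfree⟩ := exists_rank_insert_insert_eq_add_one
    (h.subtr_insert hf hS hSM) hfS hν' (hT.1 ν' hν') (Finset.disjoint_insert_right.mpr
      ⟨fun hfν' => hν'ωe (eq_of_mem_class hν' h.class_mem hfν' hf), hd⟩) hfree
  have haν' : a ∉ ν' := fun haν' => hν'ν (eq_of_mem_class hν' hν haν' haν)
  have hyS : y ∉ S := Finset.disjoint_left.mp hd hyν'
  have hay : a ≠ y := fun hay => haν' (hay ▸ hyν')
  have hyaS : Q.Subtr (insert a (insert y S)) := by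
    rw [Finset.insert_comm]
    exact haS.insert_of_disjoint hν' hyν' (Finset.disjoint_insert_right.mpr ⟨haν', hd⟩)
  have hyM := Finset.insert_subset (h.mem_minorGround hν' hν'ωe hyν') hSM
  -- the measure `Q.U.card - S.card` decreases
  have hdecr : S.card < (insert y S).card := by
    rw [Finset.card_insert_of_notMem hyS]; omega
  have hyU : (insert y S).card ≤ Q.U.card :=
    Finset.card_le_card (hyaS.1.trans' (Finset.subset_insert a _))
  have hlarger := h.rank_insert_insert_eq_add_one hT hf hyM hyaS
    (by simp [hay, ha]) haX hyfree
  have haM := Finset.insert_subset (h.subset_minorGround haX) hSM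
  have hayM := Finset.insert_subset (h.subset_minorGround haX) hyM
  by_contra hbad
  have hf0 := (rank_insert_eq_or (h.subtr_insert hf haS haM)
    (h.notMem_of_subset hf haM)).resolve_right hbad
  have := rank_insert_eq_of_subset (h.subtr_insert hf hyaS hayM)
    (Finset.insert_subset_insert a (Finset.subset_insert y S)) (h.notMem_of_subset hf hayM) hf0
  omega
termination_by Q.U.card - S.card

lemma rank_insert_eq_add_one_of_sdiff (h : Q.IsNonspanningMinorSeparator e ωe X) (hT : Q.Tight)
    (hw : w ∈ ωe) (hS : Q.Subtr S) (hSM : S ⊆ Q.minorGround {e})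
    (hfree : Q.r (insert w (S \ X)) = Q.r (S \ X) + 1) : Q.r (insert w S) = Q.r S + 1 := by
  suffices ∀ A ⊆ S ∩ X, Q.r (insert w (S \ X ∪ A)) = Q.r (S \ X ∪ A) + 1 by
    simpa [Finset.sdiff_union_inter] using this (S ∩ X) subset_rfl
  intro A hA
  induction A using Finset.induction_on with
  | empty => simpa using hfree
  | insert a A haA ih =>
    obtain ⟨haSX, hASX⟩ := Finset.insert_subset_iff.mp hA
    obtain ⟨haS, haX⟩ := Finset.mem_inter.mp haSX
    have hsub : S \ X ∪ A ⊆ S := Finset.union_subset Finset.sdiff_subset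
      (hASX.trans Finset.inter_subset_left)
    rw [Finset.union_insert]
    exact h.rank_insert_insert_eq_add_one hT hw (hsub.trans hSM)
      (hS.subset (Finset.insert_subset haS hsub))
      (by simp [haA, haX]) haX (ih hASX)

lemma rank_insert_split (h : Q.IsNonspanningMinorSeparator e ωe X) (hT : Q.Tight)
    (hw : w ∈ ωe) (hS : Q.Subtr S) (hSM : S ⊆ Q.minorGround {e}) :
    Q.r (insert w S) = Q.r (S ∩ X) + Q.r (insert w (S \ X)) := by
  have hsplit := h.rank_split hS hSM
  have hwS := h.subtr_insert hw hS hSM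
  rcases rank_insert_eq_or
    (hwS.subset (Finset.insert_subset_insert w (Finset.sdiff_subset (t := X))))
    (h.notMem_of_subset hw (Finset.sdiff_subset.trans hSM)) with hspan | hfree
  · rw [rank_insert_eq_of_subset hwS Finset.sdiff_subset (h.notMem_of_subset hw hSM) hspan]
    omega
  · rw [h.rank_insert_eq_add_one_of_sdiff hT hw hS hSM hfree]
    omega

lemma notMem (h : Q.IsNonspanningMinorSeparator e ωe X) : e ∉ X :=
  h.notMem_of_subset h.mem_class h.subset_minorGround

lemma isSeparator (h : Q.IsNonspanningMinorSeparator e ωe X) (hT : Q.Tight) :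
    Q.IsSeparator X := by
  refine ⟨h.subset_minorGround.trans fun x hx =>
    ((mem_minorGround_singleton h.class_mem h.mem_class).mp hx).1, fun ω hω => ?_, fun S hS => ?_⟩
  · by_cases hωe : ω = ωe
    · exact Or.inr (Finset.disjoint_left.mpr fun x hx hxX =>
        h.notMem_of_subset (hωe ▸ hx) h.subset_minorGround hxX)
    · exact h.isMinorSeparator.2.1 ω
        (mem_minorClasses_singleton h.class_mem h.mem_class hω hωe)
  by_cases hw : ∃ w ∈ S, w ∈ ωe
  · obtain ⟨w, hwS, hw⟩ := hw
    have hSM : S.erase w ⊆ Q.minorGround {e} := fun x hx => by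
      obtain ⟨hxw, hxS⟩ := Finset.mem_erase.mp hx
      exact (mem_minorGround_singleton h.class_mem h.mem_class).mpr
        ⟨hS.1 hxS, fun hx => hxw (hS.eq_of_mem_class h.class_mem hxS hwS hx hw)⟩
    have hwX : w ∉ X := fun hwX => h.notMem_of_subset hw h.subset_minorGround hwX
    have := h.rank_insert_split hT hw (hS.subset (Finset.erase_subset w S)) hSM
    rwa [Finset.insert_erase hwS, ← Finset.insert_inter_of_notMem hwX,
      ← Finset.insert_sdiff_of_notMem _ hwX, Finset.insert_erase hwS] at this
  · push Not at hw
    exact h.rank_split hS fun x hx => (mem_minorGround_singleton h.class_mem h.mem_class).mpr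
      ⟨hS.1 hx, hw x hx⟩

end IsNonspanningMinorSeparator

end Multimatroid

theorem circuit_in_separator_general {α : Type*} [DecidableEq α]
    (Q : Multimatroid α) (hTight : Q.Tight) (hConn : Q.Connected)
    (e : α) (he : e ∈ Q.U)
    (X : Finset α) (hX : Q.IsMinorSeparator {e} X)
    (hXne : X.Nonempty) :
    ∃ C, Q.IsCircuit C ∧ e ∈ C ∧ C ⊆ insert e X := by
  obtain ⟨ωe, hωe, heωe⟩ := Q.classes_cover e he
  by_cases hspan : ∀ A ⊆ X, Q.Subtr A → Q.r (insert e A) = Q.r A + 1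
  · have h : Q.IsNonspanningMinorSeparator e ωe X := ⟨hωe, heωe, hX, hspan⟩
    exact absurd ⟨X, h.isSeparator hTight, hXne, fun hXU => h.notMem (hXU ▸ he)⟩ hConn
  push Not at hspan
  obtain ⟨A, hAX, hA, hspan⟩ := hspan
  have hAM := hAX.trans hX.1
  have heA := Multimatroid.notMem_of_subset_minorGround hωe heωe heωe hAM
  have hAe := hA.insert_of_subset_minorGround hωe heωe heωe hAM
  obtain ⟨C, hC, heC, hCA⟩ := Multimatroid.exists_isCircuit_of_rank_insert_eq hAe heA
    ((Multimatroid.rank_insert_eq_or hAe heA).resolve_right hspan)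
  exact ⟨C, hC, heC, hCA.trans (Finset.insert_subset_insert e hAX)⟩

/-- Let `Q` be a connected tight multimatroid containing an element `e` such that `Q|e`
is disconnected. If `X` is a proper separator of `Q|e`, then `Q` has a circuit `C` with
`e ∈ C ⊆ X ∪ {e}`. -/
theorem circuit_in_separator {α : Type*} [DecidableEq α]
    (Q : Multimatroid α) (hTight : Q.Tight) (hConn : Q.Connected)
    (e : α) (he : e ∈ Q.U) (hdisc : ¬ Q.MinorConnected {e})
    (X : Finset α) (hX : Q.IsMinorSeparator {e} X)
    (hXne : X.Nonempty) (hXprop : X ≠ Q.minorGround {e}) :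
    ∃ C, Q.IsCircuit C ∧ e ∈ C ∧ C ⊆ insert e X :=
  circuit_in_separator_general Q hTight hConn e he X hX hXne
end
end

section
/- Let X be a separator in a multimatroid Q and let A be a subtransversal of Q. Let U_A be the union of the skew classes of Q that meet A. Then X − U_A is a separator in the minor Q|A. -/
noncomputable section
open scoped Classical

variable {α : Type*} [DecidableEq α]

/-- Let `X` be a separator in a multimatroid `Q` and let `A` be a subtransversal of `Q`.
Let `U_A` be the union of the skew classes of `Q` that meet `A`. Then `X − U_A` is a
separator in the minor `Q|A`. -/
theorem separator_of_minor {α : Type*} [DecidableEq α]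
    (Q : Multimatroid α) (X A : Finset α)
    (hX : Q.IsSeparator X) (hA : Q.Subtr A) :
    Q.IsMinorSeparator A (X \ (Q.Ω.filter fun ω => ¬ Disjoint ω A).biUnion id) := by
  obtain ⟨hXU, hXcl, hXr⟩ := hX
  set W := (Q.Ω.filter fun ω => ¬ Disjoint ω A).biUnion id with hWdef
  have hmemW : ∀ x, x ∈ W ↔ ∃ ω ∈ Q.Ω, ¬ Disjoint ω A ∧ x ∈ ω := by
    intro x
    simp [hWdef, Finset.mem_biUnion, Finset.mem_filter]
    tauto
  have hmemG : ∀ x, x ∈ Q.minorGround A ↔ ∃ ω ∈ Q.Ω, Disjoint ω A ∧ x ∈ ω := by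
    intro x
    simp [Multimatroid.minorGround, Multimatroid.minorClasses, Finset.mem_biUnion,
      Finset.mem_filter]
    tauto
  have hGW : ∀ x, x ∈ Q.minorGround A → x ∉ W := by
    intro x hx hxW
    obtain ⟨ω, hω, hωA, hxω⟩ := (hmemG x).1 hx
    obtain ⟨ω', hω', hω'A, hxω'⟩ := (hmemW x).1 hxW
    rcases eq_or_ne ω ω' with rfl | hne
    · exact hω'A hωA
    · exact Finset.disjoint_left.1 (Q.classes_disjoint ω hω ω' hω' hne) hxω hxω'
  -- subtransversal monotonicity
  have subtr_mono : ∀ B C : Finset α, B ⊆ C → Q.Subtr C → Q.Subtr B := by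
    intro B C hBC ⟨hCU, hCc⟩
    exact ⟨hBC.trans hCU, fun ω hω =>
      le_trans (Finset.card_le_card (Finset.inter_subset_inter hBC (le_refl ω))) (hCc ω hω)⟩
  refine ⟨?_, ?_, ?_⟩
  · intro x hx
    rw [Finset.mem_sdiff] at hx
    obtain ⟨hxX, hxW⟩ := hx
    obtain ⟨ω, hω, hxω⟩ := Q.classes_cover x (hXU hxX)
    have hdisj : Disjoint ω A := by
      by_contra h
      exact hxW ((hmemW x).2 ⟨ω, hω, h, hxω⟩)
    exact (hmemG x).2 ⟨ω, hω, hdisj, hxω⟩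
  · intro ω hω
    rw [Multimatroid.minorClasses, Finset.mem_filter] at hω
    obtain ⟨hω, hωA⟩ := hω
    rcases hXcl ω hω with h | h
    · left
      intro x hxω
      rw [Finset.mem_sdiff]
      refine ⟨h hxω, fun hxW => ?_⟩
      obtain ⟨ω', hω', hω'A, hxω'⟩ := (hmemW x).1 hxW
      rcases eq_or_ne ω ω' with rfl | hne
      · exact hω'A hωA
      · exact Finset.disjoint_left.1 (Q.classes_disjoint ω hω ω' hω' hne) hxω hxω'
    · exact Or.inr (h.mono_right (Finset.sdiff_subset))
  · intro S hS
    obtain ⟨hSg, hSc⟩ := hS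
    have hSW : ∀ x ∈ S, x ∉ W := fun x hx => hGW x (hSg hx)
    have hSX' : S ∩ (X \ W) = S ∩ X := by
      ext x
      simp only [Finset.mem_inter, Finset.mem_sdiff]
      exact ⟨fun h => ⟨h.1, h.2.1⟩, fun h => ⟨h.1, h.2, hSW x h.1⟩⟩
    have hSX'' : S \ (X \ W) = S \ X := by
      ext x
      simp only [Finset.mem_sdiff, not_and, not_not]
      constructor
      · rintro ⟨hx, h⟩
        exact ⟨hx, fun hxX => absurd (h hxX) (hSW x hx)⟩
      · rintro ⟨hx, h⟩
        exact ⟨hx, fun hxX => absurd hxX h⟩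
    rw [hSX', hSX'']
    -- S ∪ A is a subtransversal of Q
    have hSU : S ⊆ Q.U := by
      intro x hx
      obtain ⟨ω, hω, _, hxω⟩ := (hmemG x).1 (hSg hx)
      exact Q.classes_subset ω hω hxω
    have hSA : Q.Subtr (S ∪ A) := by
      refine ⟨Finset.union_subset hSU hA.1, fun ω hω => ?_⟩
      by_cases hd : Disjoint ω A
      · have : (S ∪ A) ∩ ω = S ∩ ω := by
          ext x
          simp only [Finset.mem_inter, Finset.mem_union]
          constructor
          · rintro ⟨hx | hx, hxω⟩
            · exact ⟨hx, hxω⟩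
            · exact absurd hxω (Finset.disjoint_right.1 hd hx)
          · exact fun h => ⟨Or.inl h.1, h.2⟩
        rw [this]
        exact hSc ω (Finset.mem_filter.2 ⟨hω, hd⟩)
      · have : (S ∪ A) ∩ ω = A ∩ ω := by
          ext x
          simp only [Finset.mem_inter, Finset.mem_union]
          constructor
          · rintro ⟨hx | hx, hxω⟩
            · obtain ⟨ω', hω', hω'A, hxω'⟩ := (hmemG x).1 (hSg hx)
              rcases eq_or_ne ω ω' with rfl | hne
              · exact absurd hω'A hd
              · exact absurd hxω' (Finset.disjoint_left.1
                  (Q.classes_disjoint ω hω ω' hω' hne) hxω)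
            · exact ⟨hx, hxω⟩
          · exact fun h => ⟨Or.inr h.1, h.2⟩
        rw [this]
        exact hA.2 ω hω
    have h1 : Q.Subtr ((S ∩ X) ∪ A) :=
      subtr_mono _ _ (Finset.union_subset_union Finset.inter_subset_left (le_refl A)) hSA
    have h2 : Q.Subtr ((S \ X) ∪ A) :=
      subtr_mono _ _ (Finset.union_subset_union (Finset.sdiff_subset) (le_refl A)) hSA
    have e1 := hXr (S ∪ A) hSA
    have e2 := hXr A hA
    have e3 := hXr ((S ∩ X) ∪ A) h1
    have e4 := hXr ((S \ X) ∪ A) h2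
    have s1 : (S ∪ A) ∩ X = ((S ∩ X) ∪ A) ∩ X := by
      ext x
      simp only [Finset.mem_inter, Finset.mem_union]
      tauto
    have s2 : (S ∪ A) \ X = ((S \ X) ∪ A) \ X := by
      ext x
      simp only [Finset.mem_sdiff, Finset.mem_union]
      tauto
    have s3 : ((S ∩ X) ∪ A) \ X = A \ X := by
      ext x
      simp only [Finset.mem_sdiff, Finset.mem_union, Finset.mem_inter]
      tauto
    have s4 : ((S \ X) ∪ A) ∩ X = A ∩ X := by
      ext x
      simp only [Finset.mem_inter, Finset.mem_union, Finset.mem_sdiff]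
      tauto
    rw [s1, s2] at e1
    rw [s3] at e3
    rw [s4] at e4
    omega
end
end

section
/- Let D = (E, 𝓕) be a vf-safe delta-matroid. Then D is connected if and only if there is no proper nonempty union Y of skew classes of Ω that splits the collection Q₃(D); that is, D is connected if and only if for every set X with ∅ ≠ X ≠ E, letting Y be the union of the skew classes {e, e', e''} with e ∈ X, the collection Q₃(D) is not equal to {B₁ ∪ B₂ : B₁ ∈ {B ∩ Y : B ∈ Q₃(D)}, B₂ ∈ {B ∩ (U − Y) : B ∈ Q₃(D)}}. -/
noncomputable section
open scoped Classical symmDiff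

namespace SetSystem

variable {α : Type*} [DecidableEq α]

/-- We model the ground set `U = E₀ ∪ E₁ ∪ E₂` of the 3-matroid `Q₃(D)` as `E × {0,1,2}`,
with the skew classes `{e, e', e''} = {e} × {0,1,2}` for `e ∈ E`. `q3Select B i` is the
projection `π(B ∩ Eᵢ)`. -/
def q3Select (B : Finset (α × Fin 3)) (i : Fin 3) : Finset α :=
  (B.filter fun p => p.2 = i).image Prod.fst

/-- `B` is a transversal of `Ω = {{e, e', e''} : e ∈ E}`. -/
def IsQ3Transversal (E : Finset α) (B : Finset (α × Fin 3)) : Prop :=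
  B ⊆ E ×ˢ (Finset.univ : Finset (Fin 3)) ∧ ∀ e ∈ E, ∃! i : Fin 3, (e, i) ∈ B

/-- The collection `Q₃(D)`: the transversals `B` of `Ω` such that `π(B ∩ E₁)` is a
feasible set of `D ∗̄ π(B ∩ E₂)`. -/
def q3 (D : SetSystem α) : Set (Finset (α × Fin 3)) :=
  {B | IsQ3Transversal D.E B ∧ q3Select B 1 ∈ (D.starBar (q3Select B 2)).Fs}

end SetSystem


/-!
If `X` is a separator, every feasible set of `D` is the union of a feasible part inside `X` and
an independently chosen feasible part outside `X`. Loop complementation at `e` and twisting act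
only on the side containing the elements involved, so the same is true of every `D ∗̄ A`, with
`A` cut into its two sides; this is exactly the closure of `Q₃(D)` under gluing two of its
members along the skew classes over `X`. Conversely, the transversals `(E − F) ∪ F'` with `F`
feasible lie in `Q₃(D)`, and gluing two of them shows that `(F ∩ X) ∪ (G − X)` is feasible
whenever `F` and `G` are, which makes `X` a separator.
-/

attribute [ext] SetSystem

namespace Finset

variable {α : Type*} [DecidableEq α]

theorem inter_union_sdiff_inter (F G X : Finset α) : (F ∩ X ∪ G \ X) ∩ X = F ∩ X := by
  ext a
  simp only [Finset.mem_inter, Finset.mem_union, Finset.mem_sdiff]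
  tauto

theorem inter_union_sdiff_sdiff (F G X : Finset α) : (F ∩ X ∪ G \ X) \ X = G \ X := by
  ext a
  simp only [Finset.mem_inter, Finset.mem_union, Finset.mem_sdiff]
  tauto

end Finset

namespace SetSystem

variable {α : Type*} [DecidableEq α]

def adjoin (e : α) (𝓕 : Set (Finset α)) : Set (Finset α) :=
  {F | e ∈ F ∧ F.erase e ∈ 𝓕}

theorem adjoin_symmDiff (e : α) (𝓕 𝓖 : Set (Finset α)) :
    adjoin e (𝓕 ∆ 𝓖) = adjoin e 𝓕 ∆ adjoin e 𝓖 := by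
  ext F
  simp only [adjoin, Set.mem_symmDiff, Set.mem_ofPred_eq]
  tauto

theorem adjoin_comm (e f : α) (𝓕 : Set (Finset α)) :
    adjoin e (adjoin f 𝓕) = adjoin f (adjoin e 𝓕) := by
  rcases eq_or_ne e f with rfl | hef
  · rfl
  ext F
  simp only [adjoin, Set.mem_ofPred_eq, Finset.mem_erase, Finset.erase_right_comm (a := e)]
  tauto

theorem lcomp_fs (D : SetSystem α) (e : α) : (D.lcomp e).Fs = D.Fs ∆ adjoin e D.Fs := by
  have : {F | ∃ G ∈ D.Fs, e ∉ G ∧ F = G ∪ {e}} = adjoin e D.Fs := by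
    ext F
    constructor
    · rintro ⟨G, hG, heG, rfl⟩
      rw [Finset.union_singleton]
      exact ⟨Finset.mem_insert_self e G, by rwa [Finset.erase_insert heG]⟩
    · rintro ⟨heF, hF⟩
      exact ⟨F.erase e, hF, Finset.notMem_erase e F, by
        rw [Finset.union_singleton, Finset.insert_erase heF]⟩
  rw [lcomp, this]

theorem mem_lcomp {D : SetSystem α} {e : α} {F : Finset α} :
    F ∈ (D.lcomp e).Fs ↔ Xor (F ∈ D.Fs) (e ∈ F ∧ F.erase e ∈ D.Fs) := by
  rw [lcomp_fs, Set.mem_symmDiff]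
  rfl

theorem lcomp_comm (D : SetSystem α) (e f : α) :
    (D.lcomp e).lcomp f = (D.lcomp f).lcomp e := by
  ext1
  · rfl
  · simp only [lcomp_fs, adjoin_symmDiff, adjoin_comm e f]
    ac_rfl

theorem foldl_lcomp_eq_lcompSet (D : SetSystem α) {L : List α} {A : Finset α} (hL : L.Nodup)
    (hLA : ∀ a, a ∈ L ↔ a ∈ A) : L.foldl lcomp D = D.lcompSet A :=
  have : RightCommutative (lcomp (α := α)) := ⟨lcomp_comm⟩
  List.Perm.foldl_eq ((List.perm_ext_iff_of_nodup hL A.nodup_toList).2 (by simpa using hLA)) D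

theorem mem_twist {D : SetSystem α} {A F : Finset α} : F ∈ (D.twist A).Fs ↔ F ∆ A ∈ D.Fs := by
  constructor
  · rintro ⟨G, hG, rfl⟩
    rwa [symmDiff_symmDiff_cancel_right]
  · exact fun h => ⟨F ∆ A, h, (symmDiff_symmDiff_cancel_right A F).symm⟩

theorem lcompSet_empty (D : SetSystem α) : D.lcompSet ∅ = D := by
  rw [lcompSet, Finset.toList_empty, List.foldl_nil]

theorem twist_empty (D : SetSystem α) : D.twist ∅ = D := by
  ext1
  · rfl
  · ext F
    rw [mem_twist, ← Finset.bot_eq_empty, symmDiff_bot]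

theorem starBar_empty (D : SetSystem α) : D.starBar ∅ = D := by
  rw [starBar, lcompSet_empty, twist_empty, lcompSet_empty]

/-- Unlike a separator, a splitting does not tie `D₁` and `D₂` to the ground sets `X` and
`E − X`; this is what lets it pass to loop complementations and twists of the components. -/
def Splits (D : SetSystem α) (X : Finset α) (D₁ D₂ : SetSystem α) : Prop :=
  ∀ F, F ∈ D.Fs ↔ F ∩ X ∈ D₁.Fs ∧ F \ X ∈ D₂.Fs

namespace Splits

variable {D D₁ D₂ : SetSystem α} {X : Finset α}

theorem lcomp_of_mem (h : D.Splits X D₁ D₂) {e : α} (he : e ∈ X) :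
    (D.lcomp e).Splits X (D₁.lcomp e) D₂ := by
  intro F
  have hinter : F.erase e ∩ X = (F ∩ X).erase e := Finset.erase_inter e F X
  have hsdiff : F.erase e \ X = F \ X := by
    rw [Finset.erase_sdiff_comm, Finset.erase_eq_of_notMem (by simp [he])]
  simp only [mem_lcomp, h F, h (F.erase e), hinter, hsdiff, Finset.mem_inter, he, and_true, Xor]
  tauto

theorem lcomp_of_notMem (h : D.Splits X D₁ D₂) {e : α} (he : e ∉ X) :
    (D.lcomp e).Splits X D₁ (D₂.lcomp e) := by
  intro F
  have hinter : F.erase e ∩ X = F ∩ X := by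
    rw [Finset.erase_inter, Finset.erase_eq_of_notMem (by simp [he])]
  have hsdiff : F.erase e \ X = (F \ X).erase e := Finset.erase_sdiff_comm F X e
  simp only [mem_lcomp, h F, h (F.erase e), hinter, hsdiff, Finset.mem_sdiff, he, not_false_eq_true,
    and_true, Xor]
  tauto

theorem twist (h : D.Splits X D₁ D₂) (A : Finset α) :
    (D.twist A).Splits X (D₁.twist (A ∩ X)) (D₂.twist (A \ X)) := by
  intro F
  have hinter : (F ∆ A) ∩ X = (F ∩ X) ∆ (A ∩ X) := inf_symmDiff_distrib_right F A X
  have hsdiff : (F ∆ A) \ X = (F \ X) ∆ (A \ X) := by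
    ext a
    simp only [Finset.mem_sdiff, Finset.mem_symmDiff]
    tauto
  rw [mem_twist, h, hinter, hsdiff, mem_twist, mem_twist]

theorem foldl_lcomp (L : List α) (h : D.Splits X D₁ D₂) :
    (L.foldl lcomp D).Splits X ((L.filter (· ∈ X)).foldl lcomp D₁)
      ((L.filter (· ∉ X)).foldl lcomp D₂) := by
  induction L generalizing D D₁ D₂ with
  | nil => exact h
  | cons e L ih =>
    by_cases he : e ∈ X
    · simpa [List.filter_cons, he] using ih (h.lcomp_of_mem he)
    · simpa [List.filter_cons, he] using ih (h.lcomp_of_notMem he)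

theorem lcompSet (h : D.Splits X D₁ D₂) (A : Finset α) :
    (D.lcompSet A).Splits X (D₁.lcompSet (A ∩ X)) (D₂.lcompSet (A \ X)) := by
  rw [← foldl_lcomp_eq_lcompSet D₁ (A.nodup_toList.filter fun a => a ∈ X) (by simp),
    ← foldl_lcomp_eq_lcompSet D₂ (A.nodup_toList.filter fun a => a ∉ X) (by simp)]
  exact h.foldl_lcomp A.toList

theorem starBar (h : D.Splits X D₁ D₂) (A : Finset α) :
    (D.starBar A).Splits X (D₁.starBar (A ∩ X)) (D₂.starBar (A \ X)) :=
  ((h.lcompSet A).twist A).lcompSet A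

theorem mix_mem {D' D'' D₁' D₂' : SetSystem α} (h : D.Splits X D₁ D₂)
    (h' : D'.Splits X D₁' D₂') (h'' : D''.Splits X D₁ D₂') {F G : Finset α}
    (hF : F ∈ D.Fs) (hG : G ∈ D'.Fs) : F ∩ X ∪ G \ X ∈ D''.Fs := by
  rw [h'', Finset.inter_union_sdiff_inter, Finset.inter_union_sdiff_sdiff]
  exact ⟨((h F).1 hF).1, ((h' G).1 hG).2⟩

end Splits

theorem splits_directSum {D₁ D₂ : SetSystem α} {X : Finset α} (h₁ : ∀ F ∈ D₁.Fs, F ⊆ X)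
    (h₂ : ∀ F ∈ D₂.Fs, Disjoint F X) : (D₁.directSum D₂).Splits X D₁ D₂ := by
  intro F
  constructor
  · rintro ⟨F₁, hF₁, F₂, hF₂, rfl⟩
    rw [Finset.union_inter_distrib_right, Finset.inter_eq_left.2 (h₁ F₁ hF₁),
      Finset.disjoint_iff_inter_eq_empty.1 (h₂ F₂ hF₂), Finset.union_empty,
      Finset.union_sdiff_distrib, Finset.sdiff_eq_empty_iff_subset.2 (h₁ F₁ hF₁),
      Finset.sdiff_eq_self_of_disjoint (h₂ F₂ hF₂), Finset.empty_union]
    exact ⟨hF₁, hF₂⟩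
  · rintro ⟨hF₁, hF₂⟩
    exact ⟨F ∩ X, hF₁, F \ X, hF₂, (sup_inf_sdiff F X).symm⟩

theorem IsSeparator.exists_splits {D : SetSystem α} {X : Finset α} (h : D.IsSeparator X) :
    ∃ D₁ D₂ : SetSystem α, D.Splits X D₁ D₂ := by
  obtain ⟨-, D₁, D₂, rfl, hE₂, h₁, h₂, rfl⟩ := h
  refine ⟨D₁, D₂, splits_directSum h₁ fun F hF => ?_⟩
  exact Finset.disjoint_of_subset_left (hE₂ ▸ h₂ F hF) Finset.sdiff_disjoint

theorem isSeparator_of_mix_mem {D : SetSystem α} {X : Finset α} (hX : X ⊆ D.E)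
    (hFE : ∀ F ∈ D.Fs, F ⊆ D.E) (hmix : ∀ F ∈ D.Fs, ∀ G ∈ D.Fs, F ∩ X ∪ G \ X ∈ D.Fs) :
    D.IsSeparator X := by
  refine ⟨hX, ⟨X, (· ∩ X) '' D.Fs⟩, ⟨D.E \ X, (· \ X) '' D.Fs⟩, rfl, rfl, ?_, ?_, ?_⟩
  · rintro _ ⟨F, -, rfl⟩
    exact Finset.inter_subset_right
  · rintro _ ⟨F, hF, rfl⟩
    exact Finset.sdiff_subset_sdiff (hFE F hF) le_rfl
  · ext1
    · exact (Finset.union_sdiff_of_subset hX).symm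
    · ext F
      constructor
      · intro hF
        exact ⟨F ∩ X, ⟨F, hF, rfl⟩, F \ X, ⟨F, hF, rfl⟩, (sup_inf_sdiff F X).symm⟩
      · rintro ⟨_, ⟨G, hG, rfl⟩, _, ⟨H, hH, rfl⟩, rfl⟩
        exact hmix G hG H hH

/-- With `Y` the union of the skew classes over `X`, this is `(B₁ ∩ Y) ∪ (B₂ ∩ (U − Y))`. -/
def glue (E X : Finset α) (B₁ B₂ : Finset (α × Fin 3)) : Finset (α × Fin 3) :=
  (B₁ ∩ X ×ˢ (Finset.univ : Finset (Fin 3)))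
    ∪ (B₂ ∩ ((E ×ˢ (Finset.univ : Finset (Fin 3))) \ (X ×ˢ (Finset.univ : Finset (Fin 3)))))

theorem mem_glue {E X : Finset α} {B₁ B₂ : Finset (α × Fin 3)} {a : α} {i : Fin 3} :
    (a, i) ∈ glue E X B₁ B₂ ↔ (a, i) ∈ B₁ ∧ a ∈ X ∨ (a, i) ∈ B₂ ∧ a ∈ E ∧ a ∉ X := by
  simp [glue]

theorem mem_q3Select {B : Finset (α × Fin 3)} {i : Fin 3} {a : α} :
    a ∈ q3Select B i ↔ (a, i) ∈ B := by
  simp [q3Select]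

theorem q3Select_glue {E X : Finset α} {B₁ B₂ : Finset (α × Fin 3)}
    (hB₂ : B₂ ⊆ E ×ˢ (Finset.univ : Finset (Fin 3))) (i : Fin 3) :
    q3Select (glue E X B₁ B₂) i = q3Select B₁ i ∩ X ∪ q3Select B₂ i \ X := by
  ext a
  have := @hB₂ (a, i)
  simp only [mem_q3Select, mem_glue, Finset.mem_union, Finset.mem_inter, Finset.mem_sdiff,
    Finset.mem_product, Finset.mem_univ, and_true] at this ⊢
  tauto

theorem isQ3Transversal_glue {E X : Finset α} {B₁ B₂ : Finset (α × Fin 3)}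
    (h₁ : IsQ3Transversal E B₁) (h₂ : IsQ3Transversal E B₂) :
    IsQ3Transversal E (glue E X B₁ B₂) := by
  refine ⟨fun p hp => ?_, fun e he => ?_⟩
  · rcases Finset.mem_union.1 hp with hp | hp
    · exact h₁.1 (Finset.mem_inter.1 hp).1
    · exact h₂.1 (Finset.mem_inter.1 hp).1
  · by_cases heX : e ∈ X
    · simpa [mem_glue, heX] using h₁.2 e he
    · simpa [mem_glue, heX, he] using h₂.2 e he

theorem glue_self {E X : Finset α} {B : Finset (α × Fin 3)}
    (hB : B ⊆ E ×ˢ (Finset.univ : Finset (Fin 3))) : glue E X B B = B := by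
  rw [glue, ← Finset.inter_union_distrib_left, Finset.union_sdiff_self_eq_union,
    Finset.inter_eq_left.2 (hB.trans Finset.subset_union_right)]

theorem eq_setOf_glue_iff {E X : Finset α} {S : Set (Finset (α × Fin 3))}
    (hS : ∀ B ∈ S, B ⊆ E ×ˢ (Finset.univ : Finset (Fin 3))) :
    S = {C | ∃ B₁ ∈ S, ∃ B₂ ∈ S, C = glue E X B₁ B₂} ↔
      ∀ B₁ ∈ S, ∀ B₂ ∈ S, glue E X B₁ B₂ ∈ S := by
  constructor
  · intro h B₁ hB₁ B₂ hB₂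
    rw [h]
    exact ⟨B₁, hB₁, B₂, hB₂, rfl⟩
  · intro h
    ext C
    constructor
    · exact fun hC => ⟨C, hC, C, hC, (glue_self (hS C hC)).symm⟩
    · rintro ⟨B₁, hB₁, B₂, hB₂, rfl⟩
      exact h B₁ hB₁ B₂ hB₂

theorem Splits.glue_mem_q3 {D D₁ D₂ : SetSystem α} {X : Finset α} (h : D.Splits X D₁ D₂)
    {B₁ B₂ : Finset (α × Fin 3)} (hB₁ : B₁ ∈ D.q3) (hB₂ : B₂ ∈ D.q3) :
    glue D.E X B₁ B₂ ∈ D.q3 := by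
  refine ⟨isQ3Transversal_glue hB₁.1 hB₂.1, ?_⟩
  have hmix := h.starBar (q3Select B₁ 2 ∩ X ∪ q3Select B₂ 2 \ X)
  rw [Finset.inter_union_sdiff_inter, Finset.inter_union_sdiff_sdiff] at hmix
  rw [q3Select_glue hB₂.1.1, q3Select_glue hB₂.1.1]
  exact (h.starBar _).mix_mem (h.starBar _) hmix hB₁.2 hB₂.2

/-- The transversal `(E − F) ∪ F'` of `Ω`: the elements of `F` in the copy `E₁`, the rest of
`E` in `E₀`. -/
def transversalOf (E F : Finset α) : Finset (α × Fin 3) :=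
  (E \ F) ×ˢ {0} ∪ F ×ˢ {1}

theorem q3Select_transversalOf_one (E F : Finset α) : q3Select (transversalOf E F) 1 = F := by
  ext a
  simp [mem_q3Select, transversalOf]

theorem q3Select_transversalOf_two (E F : Finset α) : q3Select (transversalOf E F) 2 = ∅ := by
  ext a
  simp [mem_q3Select, transversalOf, Fin.ext_iff]

theorem isQ3Transversal_transversalOf {E F : Finset α} (hF : F ⊆ E) :
    IsQ3Transversal E (transversalOf E F) := by
  refine ⟨?_, fun e he => ?_⟩
  · exact Finset.union_subset (Finset.product_subset_product Finset.sdiff_subset (by simp))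
      (Finset.product_subset_product hF (by simp))
  · by_cases heF : e ∈ F
    · exact ⟨1, by simp [transversalOf, heF]⟩
    · exact ⟨0, by simp [transversalOf, heF, he]⟩

theorem transversalOf_mem_q3 {D : SetSystem α} {F : Finset α} (hFE : F ⊆ D.E)
    (hF : F ∈ D.Fs) : transversalOf D.E F ∈ D.q3 := by
  refine ⟨isQ3Transversal_transversalOf hFE, ?_⟩
  rwa [q3Select_transversalOf_one, q3Select_transversalOf_two, starBar_empty]

theorem mix_mem_of_glue_mem_q3 {D : SetSystem α} {X : Finset α} (hFE : ∀ F ∈ D.Fs, F ⊆ D.E)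
    (hglue : ∀ B₁ ∈ D.q3, ∀ B₂ ∈ D.q3, glue D.E X B₁ B₂ ∈ D.q3) {F G : Finset α}
    (hF : F ∈ D.Fs) (hG : G ∈ D.Fs) : F ∩ X ∪ G \ X ∈ D.Fs := by
  have hB₂ := transversalOf_mem_q3 (hFE G hG) hG
  have := (hglue _ (transversalOf_mem_q3 (hFE F hF) hF) _ hB₂).2
  rwa [q3Select_glue hB₂.1.1, q3Select_glue hB₂.1.1, q3Select_transversalOf_one,
    q3Select_transversalOf_one, q3Select_transversalOf_two, q3Select_transversalOf_two,
    Finset.empty_inter, Finset.empty_sdiff, Finset.union_empty, starBar_empty] at this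

theorem isSeparator_iff_q3_eq_setOf_glue {D : SetSystem α} {X : Finset α}
    (hFE : ∀ F ∈ D.Fs, F ⊆ D.E) (hX : X ⊆ D.E) :
    D.IsSeparator X ↔ D.q3 = {C | ∃ B₁ ∈ D.q3, ∃ B₂ ∈ D.q3, C = glue D.E X B₁ B₂} := by
  rw [eq_setOf_glue_iff fun B hB => hB.1.1]
  constructor
  · intro hsep B₁ hB₁ B₂ hB₂
    obtain ⟨D₁, D₂, h⟩ := hsep.exists_splits
    exact h.glue_mem_q3 hB₁ hB₂
  · exact fun hglue => isSeparator_of_mix_mem hX hFE fun F hF G hG =>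
      mix_mem_of_glue_mem_q3 hFE hglue hF hG

end SetSystem

theorem connected_iff_q3_not_split_general {α : Type*} [DecidableEq α]
    (D : SetSystem α) (hD : D.IsDeltaMatroid) :
    D.Connected ↔ ∀ X : Finset α, X ⊆ D.E → X.Nonempty → X ≠ D.E →
      D.q3 ≠ {C | ∃ B₁ ∈ D.q3, ∃ B₂ ∈ D.q3,
        C = (B₁ ∩ X ×ˢ (Finset.univ : Finset (Fin 3)))
          ∪ (B₂ ∩ ((D.E ×ˢ (Finset.univ : Finset (Fin 3)))
              \ (X ×ˢ (Finset.univ : Finset (Fin 3)))))} := by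
  have key X (hX : X ⊆ D.E) := SetSystem.isSeparator_iff_q3_eq_setOf_glue hD.2.1 hX
  constructor
  · intro hconn X hX hne hE hsplit
    exact hconn ⟨X, (key X hX).2 hsplit, hne, hE⟩
  · rintro hsplit ⟨X, hsep, hne, hE⟩
    exact hsplit X hsep.1 hne hE ((key X hsep.1).1 hsep)

/-- A vf-safe delta-matroid `D` is connected if and only if there is no proper nonempty
union `Y` of skew classes of `Ω` splitting the collection `Q₃(D)`: for every `X` with
`∅ ≠ X ≠ E`, letting `Y` be the union of the skew classes `{e, e', e''}` with `e ∈ X`,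
the collection `Q₃(D)` is not equal to
`{B₁ ∪ B₂ : B₁ ∈ {B ∩ Y : B ∈ Q₃(D)}, B₂ ∈ {B ∩ (U − Y) : B ∈ Q₃(D)}}`. -/
theorem connected_iff_q3_not_split {α : Type*} [DecidableEq α]
    (D : SetSystem α) (hD : D.IsDeltaMatroid) (hvf : D.IsVfSafe) :
    D.Connected ↔ ∀ X : Finset α, X ⊆ D.E → X.Nonempty → X ≠ D.E →
      D.q3 ≠ {C | ∃ B₁ ∈ D.q3, ∃ B₂ ∈ D.q3,
        C = (B₁ ∩ X ×ˢ (Finset.univ : Finset (Fin 3)))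
          ∪ (B₂ ∩ ((D.E ×ˢ (Finset.univ : Finset (Fin 3)))
              \ (X ×ˢ (Finset.univ : Finset (Fin 3)))))} :=
  connected_iff_q3_not_split_general D hD
end
end

section
/- Let e be an element of a connected finite matroid M. Then M∖e or M/e is connected. -/
noncomputable section
open scoped Matroid

namespace Matroid

variable {α : Type*}

/-- The rank of a set `X` in a (finite) matroid `M`: the largest size of an independent
subset of `X`. -/
def rankOf (M : Matroid α) (X : Set α) : ℕ :=
  sSup {n | ∃ I, M.Indep I ∧ I ⊆ X ∧ I.ncard = n}

/-- `X` is a separator of `M`: `X ⊆ E` and `r(X) + r(E − X) = r(E)`. -/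
def IsSep (M : Matroid α) (X : Set α) : Prop :=
  X ⊆ M.E ∧ M.rankOf X + M.rankOf (M.E \ X) = M.rankOf M.E

/-- `M` is connected: it has no proper separator. -/
def IsConn (M : Matroid α) : Prop :=
  ¬ ∃ X, M.IsSep X ∧ X.Nonempty ∧ X ≠ M.E

/-- The matroid `M∖e` obtained by deleting the element `e`. -/
def delElem (M : Matroid α) (e : α) : Matroid α := M ↾ (M.E \ {e})

/-- The matroid `M/e` obtained by contracting the element `e`, via `M/e = (M✶∖e)✶`. -/
def conElem (M : Matroid α) (e : α) : Matroid α := ((M✶) ↾ (M.E \ {e}))✶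

/-- `N` is a minor of `M`: it is obtained from `M` by a sequence of single-element
deletions and contractions. -/
inductive MinorOfElem : Matroid α → Matroid α → Prop
  | refl (M : Matroid α) : MinorOfElem M M
  | del {N M : Matroid α} (e : α) : MinorOfElem N M → e ∈ N.E → MinorOfElem (N.delElem e) M
  | con {N M : Matroid α} (e : α) : MinorOfElem N M → e ∈ N.E → MinorOfElem (N.conElem e) M

end Matroid


/-! If `X` is a proper separator of `M ＼ e` and `Y` one of `M ／ e`, connectivity of `M` forces
`e` into the closure of both `Y` and its complement `E - e - Y`. Uncrossing `X` with `Y` by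
submodularity then shows that `X ∩ Y` and `(E - e - X) ∩ (E - e - Y)` cannot both be nonempty,
and likewise with `Y` replaced by its complement; these four emptiness conditions make one of the
two separators trivial. -/

namespace Set

variable {α : Type*} {E X Y : Set α} {e : α}

lemma eq_empty_or_eq_of_inter_eq_empty_or (hX : X ⊆ E) (hY : Y ⊆ E)
    (h₁ : X ∩ Y = ∅ ∨ (E \ X) ∩ (E \ Y) = ∅) (h₂ : X ∩ (E \ Y) = ∅ ∨ (E \ X) ∩ Y = ∅) :
    X = ∅ ∨ Y = ∅ ∨ Y = E ∨ X = E := by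
  rcases h₁ with h₁ | h₁ <;> rcases h₂ with h₂ | h₂
  · exact Or.inl (by tauto_set)
  · exact Or.inr (Or.inl (by tauto_set))
  · exact Or.inr (Or.inr (Or.inl (by tauto_set)))
  · exact Or.inr (Or.inr (Or.inr (by tauto_set)))

lemma sdiff_eq_insert_sdiff_singleton_sdiff (he : e ∈ E) (hX : X ⊆ E \ {e}) :
    E \ X = insert e ((E \ {e}) \ X) := by
  have heX : e ∈ E \ X := ⟨he, fun h ↦ (hX h).2 rfl⟩
  rw [sdiff_sdiff_comm, insert_sdiff_singleton, insert_eq_of_mem heX]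

end Set

namespace Matroid

open Set

variable {α : Type*} {M : Matroid α} {C D X Y : Set α} {e : α}

lemma rankOf_restrict (M : Matroid α) (R X : Set α) :
    (M ↾ R).rankOf X = M.rankOf (X ∩ R) := by
  simp only [rankOf, restrict_indep_iff, subset_inter_iff]
  congr 1
  ext n
  exact exists_congr fun I ↦ by tauto

lemma rankOf_delete (hX : X ⊆ M.E \ D) : (M ＼ D).rankOf X = M.rankOf X := by
  rw [delete_eq_restrict, rankOf_restrict, inter_eq_self_of_subset_left hX]

lemma cast_rankOf (M : Matroid α) [M.RankFinite] (X : Set α) :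
    (M.rankOf X : ℕ∞) = M.eRk X := by
  obtain ⟨I, hI⟩ := M.exists_isBasis' X
  have hIfin : I.Finite := hI.indep.finite
  have hsize : {n | ∃ J, M.Indep J ∧ J ⊆ X ∧ J.ncard = n} ⊆ Iic I.ncard := by
    rintro _ ⟨J, hJ, hJX, rfl⟩
    obtain ⟨J', hJ', hJJ'⟩ := hJ.subset_isBasis'_of_subset hJX
    have : J'.ncard = I.ncard := by
      rw [← Nat.cast_inj (R := ℕ∞), hJ'.indep.finite.cast_ncard_eq, hIfin.cast_ncard_eq,
        hJ'.encard_eq_encard hI]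
    exact (ncard_le_ncard hJJ' hJ'.indep.finite).trans this.le
  have hmem : I.ncard ∈ {n | ∃ J, M.Indep J ∧ J ⊆ X ∧ J.ncard = n} :=
    ⟨I, hI.indep, hI.subset, rfl⟩
  rw [rankOf, IsGreatest.csSup_eq ⟨hmem, hsize⟩, hIfin.cast_ncard_eq, hI.encard_eq_eRk]

lemma rankOf_mono (M : Matroid α) [M.RankFinite] (hXY : X ⊆ Y) :
    M.rankOf X ≤ M.rankOf Y := by
  have := M.eRk_mono hXY
  rwa [← cast_rankOf, ← cast_rankOf, Nat.cast_le] at this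

lemma rankOf_inter_add_rankOf_union_le (M : Matroid α) [M.RankFinite] (X Y : Set α) :
    M.rankOf (X ∩ Y) + M.rankOf (X ∪ Y) ≤ M.rankOf X + M.rankOf Y := by
  have := M.eRk_inter_add_eRk_union_le X Y
  simp only [← cast_rankOf] at this
  exact_mod_cast this

lemma rankOf_singleton_le (M : Matroid α) [M.RankFinite] (e : α) : M.rankOf {e} ≤ 1 := by
  have := M.eRk_singleton_le e
  rw [← cast_rankOf] at this
  exact_mod_cast this

lemma rankOf_dual_add_rankOf_ground [M.Finite] (hX : X ⊆ M.E) :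
    M✶.rankOf X + M.rankOf M.E = M.rankOf (M.E \ X) + X.ncard := by
  have := M.eRk_dual_add_eRank X hX
  rw [eRank_def, ← (M.ground_finite.subset hX).cast_ncard_eq] at this
  simp only [← cast_rankOf] at this
  exact_mod_cast this

lemma rankOf_contract_add_rankOf [M.Finite] (hC : C ⊆ M.E) (hX : X ⊆ M.E \ C) :
    (M ／ C).rankOf X + M.rankOf C = M.rankOf (X ∪ C) := by
  -- `M ／ C = (M✶ ＼ C)✶`: apply the dual rank formula to `M✶ ＼ C`, then twice to `M`.
  have hdual := rankOf_dual_add_rankOf_ground (M := M✶ ＼ C) (X := X) hX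
  rw [dual_delete_dual, delete_ground, dual_ground,
    rankOf_delete (M := M✶) (X := (M.E \ C) \ X) sdiff_subset,
    rankOf_delete (M := M✶) (X := M.E \ C) subset_rfl] at hdual
  have hground := rankOf_dual_add_rankOf_ground (M := M) (X := M.E \ C) sdiff_subset
  have hcompl := rankOf_dual_add_rankOf_ground (M := M) (X := (M.E \ C) \ X)
    (sdiff_subset.trans sdiff_subset)
  rw [sdiff_sdiff_cancel_left hC] at hground
  rw [sdiff_sdiff_right, sdiff_sdiff_cancel_left hC,
    inter_eq_self_of_subset_right (hX.trans sdiff_subset), union_comm] at hcompl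
  have hcard := ncard_sdiff_add_ncard_of_subset hX (M.ground_finite.sdiff (t := C))
  omega

lemma rankOf_insert_eq_of_subset [M.RankFinite] (hXY : X ⊆ Y)
    (hX : M.rankOf (insert e X) = M.rankOf X) : M.rankOf (insert e Y) = M.rankOf Y := by
  have hsub := M.rankOf_inter_add_rankOf_union_le (insert e X) Y
  rw [insert_union, union_eq_self_of_subset_left hXY] at hsub
  have hinter := M.rankOf_mono (subset_inter (subset_insert e X) hXY)
  have hmono := M.rankOf_mono (subset_insert e Y)
  omega

lemma IsSep.compl (hX : M.IsSep X) : M.IsSep (M.E \ X) := by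
  refine ⟨sdiff_subset, ?_⟩
  rw [sdiff_sdiff_cancel_left hX.1, add_comm]
  exact hX.2

lemma IsConn.rankOf_ground_lt [M.RankFinite] (hM : M.IsConn) (hXE : X ⊆ M.E)
    (hXne : X.Nonempty) (hX : X ≠ M.E) : M.rankOf M.E < M.rankOf X + M.rankOf (M.E \ X) := by
  have hsub := M.rankOf_inter_add_rankOf_union_le X (M.E \ X)
  rw [union_sdiff_cancel hXE] at hsub
  have hne : M.rankOf X + M.rankOf (M.E \ X) ≠ M.rankOf M.E :=
    fun h ↦ hM ⟨X, ⟨hXE, h⟩, hXne, hX⟩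
  omega


lemma IsConn.rankOf_ground_lt_insert [M.RankFinite] (hM : M.IsConn) (he : e ∈ M.E)
    (hX : X ⊆ M.E \ {e}) (hXne : X.Nonempty) :
    M.rankOf M.E < M.rankOf X + M.rankOf (insert e ((M.E \ {e}) \ X)) := by
  rw [← sdiff_eq_insert_sdiff_singleton_sdiff he hX]
  exact hM.rankOf_ground_lt (hX.trans sdiff_subset) hXne fun h ↦ (hX (h ▸ he)).2 rfl

lemma rankOf_add_rankOf_of_isSep_delete (hX : (M ＼ D).IsSep X) :
    M.rankOf X + M.rankOf ((M.E \ D) \ X) = M.rankOf (M.E \ D) := by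
  have h := hX.2
  rwa [delete_ground, rankOf_delete hX.1, rankOf_delete sdiff_subset,
    rankOf_delete subset_rfl] at h

lemma rankOf_insert_add_rankOf_insert_of_isSep_contract [M.Finite] (he : e ∈ M.E)
    (hX : (M ／ {e}).IsSep X) :
    M.rankOf (insert e X) + M.rankOf (insert e ((M.E \ {e}) \ X)) ≤ M.rankOf M.E + 1 := by
  have hC : {e} ⊆ M.E := singleton_subset_iff.2 he
  have h := hX.2
  have h₁ := rankOf_contract_add_rankOf hC hX.1
  have h₂ := rankOf_contract_add_rankOf hC (sdiff_subset (s := M.E \ {e}) (t := X))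
  have h₃ := rankOf_contract_add_rankOf hC (subset_refl (M.E \ {e}))
  rw [sdiff_union_self, union_eq_self_of_subset_right hC] at h₃
  simp only [union_singleton] at h₁ h₂
  simp only [contract_ground] at h
  have hle := M.rankOf_singleton_le e
  omega

lemma IsConn.rankOf_insert_eq_of_isSep_contract [M.Finite] (hM : M.IsConn) (he : e ∈ M.E)
    (hX : (M ／ {e}).IsSep X) (hXne : X.Nonempty) : M.rankOf (insert e X) = M.rankOf X := by
  have hsep := rankOf_insert_add_rankOf_insert_of_isSep_contract he hX
  have hconn := hM.rankOf_ground_lt_insert he hX.1 hXne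
  have hmono := M.rankOf_mono (subset_insert e X)
  omega

lemma IsConn.inter_eq_empty_or_of_isSep [M.Finite] (hM : M.IsConn) (he : e ∈ M.E)
    (hX : (M ＼ {e}).IsSep X) (hY : (M ／ {e}).IsSep Y) (hYne : Y.Nonempty)
    (hYE : Y ≠ M.E \ {e}) :
    X ∩ Y = ∅ ∨ ((M.E \ {e}) \ X) ∩ ((M.E \ {e}) \ Y) = ∅ := by
  have hX' : X ⊆ M.E \ {e} := hX.1
  have hY' : Y ⊆ M.E \ {e} := hY.1
  have hYcne : ((M.E \ {e}) \ Y).Nonempty := sdiff_nonempty.2 fun h ↦ hYE (hY'.antisymm h)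
  have hYe := hM.rankOf_insert_eq_of_isSep_contract he hY hYne
  have hYce : M.rankOf (insert e ((M.E \ {e}) \ Y)) = M.rankOf ((M.E \ {e}) \ Y) :=
    hM.rankOf_insert_eq_of_isSep_contract he hY.compl hYcne
  have hXr := rankOf_add_rankOf_of_isSep_delete hX
  have hYr := rankOf_insert_add_rankOf_insert_of_isSep_contract he hY
  have hE' := M.rankOf_mono (sdiff_subset : M.E \ {e} ⊆ M.E)
  rw [← not_nonempty_iff_eq_empty, ← not_nonempty_iff_eq_empty, ← not_and_or]
  rintro ⟨hA, hB⟩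
  -- Connectivity of `M` bounds both sums below by `r(E) + 1`, as `e` is spanned by the
  -- complement of each set; submodularity bounds their total above by `2 r(E) + 1`.
  have hAc : (M.E \ {e}) \ (X ∩ Y) = ((M.E \ {e}) \ X) ∪ ((M.E \ {e}) \ Y) := sdiff_inter
  have hBc : (M.E \ {e}) \ (((M.E \ {e}) \ X) ∩ ((M.E \ {e}) \ Y)) = X ∪ Y := by
    rw [sdiff_inter, sdiff_sdiff_cancel_left hX', sdiff_sdiff_cancel_left hY']
  have h₁ := hM.rankOf_ground_lt_insert he (inter_subset_left.trans hX') hA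
  have h₂ := hM.rankOf_ground_lt_insert he (inter_subset_left.trans sdiff_subset) hB
  rw [hAc, rankOf_insert_eq_of_subset subset_union_right hYce] at h₁
  rw [hBc, rankOf_insert_eq_of_subset subset_union_right hYe] at h₂
  have s₁ := M.rankOf_inter_add_rankOf_union_le X Y
  have s₂ := M.rankOf_inter_add_rankOf_union_le ((M.E \ {e}) \ X) ((M.E \ {e}) \ Y)
  omega

end Matroid

open Matroid Set

/-- **Tutte's chain theorem.** Let `e` be an element of a connected finite matroid `M`.
Then `M∖e` or `M/e` is connected. -/
theorem matroid_chain {α : Type*} (M : Matroid α) (hfin : M.E.Finite)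
    (hconn : M.IsConn) (e : α) (he : e ∈ M.E) :
    (M.delElem e).IsConn ∨ (M.conElem e).IsConn := by
  have : M.Finite := ⟨hfin⟩
  by_contra! h
  obtain ⟨X, hX, hXne, hXE : X ≠ M.E \ {e}⟩ := not_not.1 h.1
  obtain ⟨Y, hY, hYne, hYE : Y ≠ M.E \ {e}⟩ := not_not.1 h.2
  have hXsub : X ⊆ M.E \ {e} := hX.1
  have hYsub : Y ⊆ M.E \ {e} := hY.1
  have h₁ := hconn.inter_eq_empty_or_of_isSep he hX hY hYne hYE
  have hYc : (M ／ {e}).IsSep ((M.E \ {e}) \ Y) := hY.compl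
  have h₂ := hconn.inter_eq_empty_or_of_isSep he hX hYc
    (sdiff_nonempty.2 fun h ↦ hYE (hYsub.antisymm h)) fun h ↦ hYne.ne_empty (by tauto_set)
  rw [sdiff_sdiff_cancel_left hYsub] at h₂
  obtain hX | hY | hY | hX := eq_empty_or_eq_of_inter_eq_empty_or hXsub hYsub h₁ h₂
  exacts [hXne.ne_empty hX, hYne.ne_empty hY, hYE hY, hXE hX]
end
end
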